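/- arXiv:2205.08879 — 3 statements merged into one kernel-verified Lean document; each statement's English description precedes it below -/
import Mathlib

section
/- Let ([P*],[u*]) be an optimal process for the free-payments control problem with η∈[0,1) and γ>0. Then the absolute debt priority rule holds: for every node i∈{1,…,n} and every period t∈{0,…,T−1}, p*_i(t) = min( p̄*_i(t), w*_i(t) + c*_i(t) + Σ_{j≠i} P*_{ji}(t) ), where p*(t)=P*(t)1, p̄*(t)=P̄*(t)1, and w*, c*, P̄* are the net worths, total inflows, and residual liabilities generated by the optimal process. -/
/-!
Feasibility alone gives `p_i(t) ≤ min (p̄_i(t), w_i(t) + c_i(t) + Σ_{j ≠ i} P_ji(t))`; at an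
optimum the inequality cannot be strict, by backward induction on `t`. If it were strict, node `i`
would end period `t` with positive net worth and some liability `P̄_ij(t) - P_ij(t) > 0` unpaid.
The tool is a pulse: for a nonnegative matrix `M`, pay `δ M` more at `t` and `α ^ (σ - t) δ M`
less at a later `σ`. The budget is untouched and residual liabilities drop by `α ^ (s - t) δ M`
for `t < s ≤ σ` and are unchanged afterwards, so the cost drops strictly (as `η < 1`); what has to
be checked is feasibility.

If `i` pays nothing after `t`, take for `M` the single entry `(i, j)` and `σ = T`. Otherwise let
`σ` be the first later period in which `i` pays, say to `k`. Starting at `k`, follow positive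
payments of period `σ` out of nodes that end `σ` broke: a set of broke nodes closed under such
payments cannot receive `P_ik(σ) > 0` from outside, so the walk reaches `i` or a node `z` of
positive net worth. With `M` the edge `i → k` plus this walk, cutting payments along `M` at `σ`
only moves cash from `z` back to `i`. By the induction hypothesis `z` obeys absolute priority at
`σ`; having positive net worth, it has paid off all its liabilities, so its net worth no longer
decreases and absorbs the loss `(α ^ (σ - t) - 1) δ`.
-/

open Finset

noncomputable section

/-- Residual liability matrices: `P̄(0) = P̄`, `P̄(t+1) = α (P̄(t) - P(t))`. -/
def resLiab {n : ℕ} (α : ℝ) (Pbar : Matrix (Fin n) (Fin n) ℝ)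
    (P : ℕ → Matrix (Fin n) (Fin n) ℝ) : ℕ → Matrix (Fin n) (Fin n) ℝ
  | 0 => Pbar
  | t + 1 => fun i j => α * (resLiab α Pbar P t i j - P t i j)

/-- Net worths: `w(0) = 0`, `w(t+1) = w(t) + c(t) + P(t)ᵀ1 - P(t)1`. -/
def netWorth {n : ℕ} (c : ℕ → Fin n → ℝ)
    (P : ℕ → Matrix (Fin n) (Fin n) ℝ) : ℕ → Fin n → ℝ
  | 0 => fun _ => 0
  | t + 1 => fun i => netWorth c P t i + c t i + (∑ j, P t j i) - (∑ j, P t i j)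

/-- Cumulative injected cash `B(t) = Σ_{k=0}^{t} 1ᵀ u(k)`. -/
def budget {n : ℕ} (u : ℕ → Fin n → ℝ) (t : ℕ) : ℝ :=
  ∑ k ∈ range (t + 1), ∑ i, u k i

/-- Feasibility of a process `([P],[u])` for the free-payments control problem. -/
def FeasibleFree {n : ℕ} (T : ℕ) (α : ℝ) (Pbar : Matrix (Fin n) (Fin n) ℝ)
    (e : ℕ → Fin n → ℝ) (F : ℕ → ℝ)
    (P : ℕ → Matrix (Fin n) (Fin n) ℝ) (u : ℕ → Fin n → ℝ) : Prop :=
  ∀ t, t < T →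
    (∀ i j, 0 ≤ P t i j) ∧ (∀ i, 0 ≤ u t i) ∧
    (∀ i j, P t i j ≤ resLiab α Pbar P t i j) ∧
    (∀ i, 0 ≤ netWorth (fun s i => e s i + u s i) P (t + 1) i) ∧
    budget u t ≤ F t

/-- Cost `J([P],[u])` of the free-payments control problem. -/
def costFree {n : ℕ} (T : ℕ) (α η γ : ℝ) (Pbar : Matrix (Fin n) (Fin n) ℝ)
    (P : ℕ → Matrix (Fin n) (Fin n) ℝ) (u : ℕ → Fin n → ℝ) : ℝ :=
  (1 - η) * ∑ t ∈ range T, ∑ i, ∑ j, (resLiab α Pbar P t i j - P t i j)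
    + η * ∑ i, ∑ j, resLiab α Pbar P T i j
    + γ * budget u (T - 1)

/-- Optimality for the free-payments control problem. -/
def OptimalFree {n : ℕ} (T : ℕ) (α η γ : ℝ) (Pbar : Matrix (Fin n) (Fin n) ℝ)
    (e : ℕ → Fin n → ℝ) (F : ℕ → ℝ)
    (P : ℕ → Matrix (Fin n) (Fin n) ℝ) (u : ℕ → Fin n → ℝ) : Prop :=
  FeasibleFree T α Pbar e F P u ∧
  ∀ P' u', FeasibleFree T α Pbar e F P' u' →
    costFree T α η γ Pbar P u ≤ costFree T α η γ Pbar P' u'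

open Filter Topology

def netInflow {ι : Type*} [Fintype ι] (M : Matrix ι ι ℝ) (v : ι) : ℝ :=
  ∑ j, M j v - ∑ j, M v j

theorem single_nonneg {ι : Type*} [DecidableEq ι] {c : ℝ} (hc : 0 ≤ c) (a b x y : ι) :
    0 ≤ Matrix.single a b c x y := by
  rw [Matrix.single_apply]
  split_ifs <;> simp [hc]

section NetInflow
variable {ι : Type*} [Fintype ι]

theorem netInflow_add (M N : Matrix ι ι ℝ) (v : ι) :
    netInflow (M + N) v = netInflow M v + netInflow N v := by
  simp only [netInflow, Matrix.add_apply, sum_add_distrib]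
  ring

theorem netInflow_single [DecidableEq ι] (a b v : ι) :
    netInflow (Matrix.single a b 1) v = (if v = b then 1 else 0) - (if v = a then 1 else 0) := by
  simp only [netInflow, Matrix.single_apply, ite_and]
  simp [sum_ite_eq, eq_comm]

theorem sum_netInflow [DecidableEq ι] (M : Matrix ι ι ℝ) (S : Finset ι) :
    ∑ v ∈ S, netInflow M v = ∑ v ∈ S, ∑ j ∈ Sᶜ, (M j v - M v j) := by
  have hsplit (f : ι → ℝ) : ∑ j, f j = ∑ j ∈ S, f j + ∑ j ∈ Sᶜ, f j :=
    (sum_add_sum_compl S f).symm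
  simp only [netInflow, hsplit, sum_sub_distrib, sum_add_distrib]
  rw [sum_comm (s := S) (t := S)]
  ring

theorem exists_flow_of_reflTransGen [DecidableEq ι] {r : ι → ι → Prop} {x y : ι}
    (h : Relation.ReflTransGen r x y) :
    ∃ M : Matrix ι ι ℝ, (∀ a b, 0 ≤ M a b) ∧ (∀ a b, M a b ≠ 0 → r a b) ∧
      ∀ v, netInflow M v = (if v = y then 1 else 0) - (if v = x then 1 else 0) := by
  induction h with
  | refl => exact ⟨0, fun _ _ => le_rfl, fun _ _ h => absurd rfl h, fun v => by simp [netInflow]⟩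
  | @tail b c _ hbc ih =>
    obtain ⟨M, hM, hsupp, hflow⟩ := ih
    refine ⟨M + Matrix.single b c 1, fun a d => ?_, fun a d had => ?_, fun v => ?_⟩
    · exact add_nonneg (hM a d) (single_nonneg zero_le_one b c a d)
    · by_cases hbd : b = a ∧ c = d
      · obtain ⟨rfl, rfl⟩ := hbd
        exact hbc
      · exact hsupp a d (by simpa [Matrix.single_apply_of_ne _ _ _ _ _ hbd] using had)
    · rw [netInflow_add, hflow, netInflow_single]
      ring

end NetInflow

theorem eventually_mul_le {c d : ℝ} (hd : 0 ≤ d) (hcd : 0 < c → 0 < d) :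
    ∀ᶠ δ in 𝓝[>] (0 : ℝ), δ * c ≤ d := by
  rcases hd.lt_or_eq with hd | rfl
  · have hcont : Continuous fun δ : ℝ => δ * c := by fun_prop
    have hlim : Tendsto (fun δ => δ * c) (𝓝[>] 0) (𝓝 0) :=
      (hcont.tendsto' 0 0 (zero_mul c)).mono_left nhdsWithin_le_nhds
    exact (hlim.eventually (gt_mem_nhds hd)).mono fun _ h => h.le
  · have hc : c ≤ 0 := not_lt.1 fun h => (hcd h).false
    exact eventually_mem_nhdsWithin.mono fun δ hδ => mul_nonpos_of_nonneg_of_nonpos (le_of_lt hδ) hc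

def compoundedSum (α : ℝ) (g : ℕ → ℝ) : ℕ → ℝ
  | 0 => 0
  | s + 1 => α * (compoundedSum α g s + g s)

section Perturbation
variable {n : ℕ} (α : ℝ) (Pbar : Matrix (Fin n) (Fin n) ℝ) (P : ℕ → Matrix (Fin n) (Fin n) ℝ)
  (g : ℕ → ℝ) (M : Matrix (Fin n) (Fin n) ℝ)

theorem resLiab_add_smul (s : ℕ) :
    resLiab α Pbar (fun r => P r + g r • M) s = resLiab α Pbar P s - compoundedSum α g s • M := by
  induction s with
  | zero => ext; simp [resLiab, compoundedSum]
  | succ s ih =>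
    ext a b
    rw [Matrix.sub_apply, Matrix.smul_apply]
    simp only [resLiab, ih, compoundedSum, Matrix.sub_apply, Matrix.add_apply, Matrix.smul_apply,
      smul_eq_mul]
    ring

theorem netWorth_succ_eq_add_netInflow (c : ℕ → Fin n → ℝ) (s : ℕ) (v : Fin n) :
    netWorth c P (s + 1) v = netWorth c P s v + c s v + netInflow (P s) v := by
  simp only [netWorth, netInflow]
  ring

theorem netWorth_add_smul (c : ℕ → Fin n → ℝ) (s : ℕ) (v : Fin n) :
    netWorth c (fun r => P r + g r • M) s v
      = netWorth c P s v + (∑ r ∈ range s, g r) * netInflow M v := by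
  induction s with
  | zero => simp [netWorth]
  | succ s ih =>
    have hsmul : netInflow (g s • M) v = g s * netInflow M v := by
      simp only [netInflow, Matrix.smul_apply, smul_eq_mul, ← mul_sum]
      ring
    rw [netWorth_succ_eq_add_netInflow, netWorth_succ_eq_add_netInflow, ih, netInflow_add, hsmul,
      sum_range_succ]
    ring

theorem costFree_add_smul (T : ℕ) (η γ : ℝ) (u : ℕ → Fin n → ℝ) :
    costFree T α η γ Pbar (fun r => P r + g r • M) u
      = costFree T α η γ Pbar P u
        - ((1 - η) * ∑ s ∈ range T, (compoundedSum α g s + g s) + η * compoundedSum α g T)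
          * ∑ a, ∑ b, M a b := by
  simp only [costFree, resLiab_add_smul, Matrix.sub_apply, Matrix.add_apply, Matrix.smul_apply,
    smul_eq_mul]
  simp only [sub_add_eq_sub_sub, sum_sub_distrib, sum_add_distrib, ← mul_sum, ← sum_mul]
  ring

end Perturbation

def pulse (α δ : ℝ) (t σ s : ℕ) : ℝ :=
  if s = t then δ else if s = σ then -(α ^ (σ - t) * δ) else 0

section Pulse
variable {α δ : ℝ} {t σ : ℕ}

theorem compoundedSum_pulse (htσ : t < σ) (s : ℕ) :
    compoundedSum α (pulse α δ t σ) s = if t < s ∧ s ≤ σ then α ^ (s - t) * δ else 0 := by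
  induction s with
  | zero => simp [compoundedSum]
  | succ s ih =>
    rw [compoundedSum, ih]
    rcases lt_trichotomy s t with hs | rfl | hs
    · simp [pulse, hs.ne, (hs.trans htσ).ne, hs.not_gt, show ¬ t < s + 1 by omega]
    · simp [pulse, htσ]
    · rcases lt_trichotomy s σ with hsσ | rfl | hsσ
      · simp only [pulse, hs, hs.ne', hs.le, hsσ, hsσ.ne, hsσ.le, Order.lt_add_one_iff,
          Order.add_one_le_iff, and_self, ↓reduceIte, add_zero, Nat.succ_sub hs.le, pow_succ]
        ring
      · simp [pulse, hs.ne', hs]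
      · simp [pulse, hs.ne', hsσ.ne', hsσ.not_ge, show ¬ s + 1 ≤ σ by omega]

theorem compoundedSum_pulse_add_pulse (htσ : t < σ) (s : ℕ) :
    compoundedSum α (pulse α δ t σ) s + pulse α δ t σ s
      = if t ≤ s ∧ s < σ then α ^ (s - t) * δ else 0 := by
  rw [compoundedSum_pulse htσ]
  rcases lt_trichotomy s t with hs | rfl | hs
  · simp [pulse, hs.ne, (hs.trans htσ).ne, hs.not_gt, hs.not_ge]
  · simp [pulse, htσ]
  · rcases lt_trichotomy s σ with hsσ | rfl | hsσ
    · simp [pulse, hs.ne', hsσ.ne, hs, hsσ.le, hsσ, hs.le]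
    · simp [pulse, hs.ne', hs]
    · simp [pulse, hs.ne', hsσ.ne', hsσ.not_ge, hsσ.not_gt]

theorem sum_range_pulse (htσ : t < σ) (s : ℕ) :
    ∑ r ∈ range s, pulse α δ t σ r
      = (if t < s then δ else 0) - (if σ < s then α ^ (σ - t) * δ else 0) := by
  have hsplit (r : ℕ) : pulse α δ t σ r
      = (if r = t then δ else 0) - (if r = σ then α ^ (σ - t) * δ else 0) := by
    unfold pulse
    split_ifs <;> first | omega | ring
  simp [hsplit, sum_sub_distrib, sum_ite_eq']

end Pulse

def AbsolutePriority {n : ℕ} (α : ℝ) (Pbar : Matrix (Fin n) (Fin n) ℝ) (e : ℕ → Fin n → ℝ)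
    (P : ℕ → Matrix (Fin n) (Fin n) ℝ) (u : ℕ → Fin n → ℝ) (t : ℕ) (i : Fin n) : Prop :=
  ∑ j, P t i j = min (∑ j, resLiab α Pbar P t i j)
    (netWorth (fun s i => e s i + u s i) P t i + (e t i + u t i) + ∑ j ∈ univ.erase i, P t j i)

section FreePayments
variable {n T : ℕ} {α η γ : ℝ} {Pbar : Matrix (Fin n) (Fin n) ℝ} {e : ℕ → Fin n → ℝ}
  {F : ℕ → ℝ} {P : ℕ → Matrix (Fin n) (Fin n) ℝ} {u : ℕ → Fin n → ℝ}

local notation "w" => netWorth (fun s i => e s i + u s i) P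

theorem resLiab_eq_pow_mul_sub {s r : ℕ} (hsr : s < r) {a b : Fin n}
    (hidle : ∀ q, s < q → q < r → P q a b = 0) :
    resLiab α Pbar P r a b = α ^ (r - s) * (resLiab α Pbar P s a b - P s a b) := by
  induction r, hsr using Nat.le_induction with
  | base => simp [resLiab]
  | succ r hr ih =>
    show α * (resLiab α Pbar P r a b - P r a b) = _
    rw [ih fun q h1 h2 => hidle q h1 (by omega), hidle r hr (by omega),
      show r + 1 - s = r - s + 1 by omega, pow_succ]
    ring

theorem costFree_add_pulse_lt (hα : 0 ≤ α) (hη0 : 0 ≤ η) (hη1 : η < 1) {t σ : ℕ} (ht : t < T)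
    (htσ : t < σ) {δ : ℝ} (hδ : 0 < δ) {M : Matrix (Fin n) (Fin n) ℝ}
    (hM : 0 < ∑ a, ∑ b, M a b) :
    costFree T α η γ Pbar (fun r => P r + pulse α δ t σ r • M) u < costFree T α η γ Pbar P u := by
  rw [costFree_add_smul]
  have hterm (s : ℕ) : 0 ≤ compoundedSum α (pulse α δ t σ) s + pulse α δ t σ s := by
    rw [compoundedSum_pulse_add_pulse htσ]
    split_ifs <;> positivity
  have hsum : δ ≤ ∑ s ∈ range T, (compoundedSum α (pulse α δ t σ) s + pulse α δ t σ s) :=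
    calc δ = compoundedSum α (pulse α δ t σ) t + pulse α δ t σ t := by
          simp [compoundedSum_pulse_add_pulse htσ, htσ]
      _ ≤ _ := single_le_sum (fun s _ => hterm s) (mem_range.2 ht)
  have hlast : 0 ≤ compoundedSum α (pulse α δ t σ) T := by
    rw [compoundedSum_pulse htσ]
    split_ifs <;> positivity
  have hdecrease : 0 < (1 - η) * ∑ s ∈ range T, (compoundedSum α (pulse α δ t σ) s
      + pulse α δ t σ s) + η * compoundedSum α (pulse α δ t σ) T := by
    nlinarith [mul_nonneg hη0 hlast]
  linarith [mul_pos hdecrease hM]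

theorem OptimalFree.not_feasibleFree_add_pulse (hopt : OptimalFree T α η γ Pbar e F P u)
    (hα : 0 ≤ α) (hη0 : 0 ≤ η) (hη1 : η < 1) {t σ : ℕ} (ht : t < T) (htσ : t < σ) {δ : ℝ}
    (hδ : 0 < δ) {M : Matrix (Fin n) (Fin n) ℝ} (hM : 0 < ∑ a, ∑ b, M a b) :
    ¬ FeasibleFree T α Pbar e F (fun r => P r + pulse α δ t σ r • M) u := fun h =>
  (costFree_add_pulse_lt hα hη0 hη1 ht htσ hδ hM).not_ge (hopt.2 _ _ h)

namespace FeasibleFree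
variable (hfeas : FeasibleFree T α Pbar e F P u)
include hfeas

theorem nonneg {s : ℕ} (hs : s < T) (a b : Fin n) : 0 ≤ P s a b := (hfeas s hs).1 a b

theorem le_resLiab {s : ℕ} (hs : s < T) (a b : Fin n) : P s a b ≤ resLiab α Pbar P s a b :=
  (hfeas s hs).2.2.1 a b

theorem netWorth_nonneg {s : ℕ} (hs : s ≤ T) (v : Fin n) : 0 ≤ w s v := by
  cases s with
  | zero => exact le_rfl
  | succ s => exact (hfeas s hs).2.2.2.1 v

theorem resLiab_diag (hPdiag : ∀ i, Pbar i i = 0) {s : ℕ} (hs : s ≤ T) (a : Fin n) :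
    resLiab α Pbar P s a a = 0 := by
  induction s with
  | zero => exact hPdiag a
  | succ s ih =>
    have hD := ih (by omega)
    have hP : P s a a = 0 :=
      le_antisymm (hD ▸ hfeas.le_resLiab (by omega) a a) (hfeas.nonneg (by omega) a a)
    simp [resLiab, hD, hP]

theorem netWorth_succ (hPdiag : ∀ i, Pbar i i = 0) {s : ℕ} (hs : s < T) (v : Fin n) :
    w (s + 1) v = w s v + (e s v + u s v) + ∑ j ∈ univ.erase v, P s j v - ∑ j, P s v j := by
  have hP : P s v v = 0 := le_antisymm
    ((hfeas.le_resLiab hs v v).trans_eq (hfeas.resLiab_diag hPdiag hs.le v)) (hfeas.nonneg hs v v)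
  simp only [netWorth]
  rw [← add_sum_erase univ (fun j => P s j v) (mem_univ v), hP]
  ring

theorem netWorth_mono (he : ∀ t, t < T → ∀ i, 0 ≤ e t i) {v : Fin n} {s₁ s₂ : ℕ}
    (h12 : s₁ ≤ s₂) (h2 : s₂ ≤ T) (hidle : ∀ r, s₁ ≤ r → r < s₂ → ∀ j, P r v j = 0) :
    w s₁ v ≤ w s₂ v := by
  induction s₂, h12 using Nat.le_induction with
  | base => exact le_rfl
  | succ s hs ih =>
    refine (ih (by omega) fun r h1 h2 => hidle r h1 (by omega)).trans ?_
    have hout : ∑ j, P s v j = 0 := sum_eq_zero fun j _ => hidle s hs (by omega) j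
    have hin : 0 ≤ ∑ j, P s j v := sum_nonneg fun j _ => hfeas.nonneg (by omega) j v
    have hc : 0 ≤ e s v + u s v := add_nonneg (he s (by omega) v) ((hfeas s (by omega)).2.1 v)
    simp only [netWorth]
    linarith

theorem le_pow_mul_sub (hα : 0 ≤ α) {s σ : ℕ} (hsσ : s < σ) (hσ : σ < T) (a b : Fin n) :
    P σ a b ≤ α ^ (σ - s) * (resLiab α Pbar P s a b - P s a b) := by
  have hres : ∀ r, s < r → r ≤ T →
      resLiab α Pbar P r a b ≤ α ^ (r - s) * (resLiab α Pbar P s a b - P s a b) := by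
    intro r hsr hr
    induction r, hsr using Nat.le_induction with
    | base => simp [resLiab]
    | succ r hsr ih =>
      have hP := hfeas.nonneg (s := r) (by omega) a b
      calc resLiab α Pbar P (r + 1) a b = α * (resLiab α Pbar P r a b - P r a b) := rfl
        _ ≤ α * (α ^ (r - s) * (resLiab α Pbar P s a b - P s a b)) := by
          gcongr
          linarith [ih (by omega)]
        _ = α ^ (r + 1 - s) * (resLiab α Pbar P s a b - P s a b) := by
          rw [show r + 1 - s = r - s + 1 by omega, pow_succ]
          ring
  exact (hfeas.le_resLiab hσ a b).trans (hres σ hsσ hσ.le)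

theorem pos_netWorth_and_slack_of_not_absolutePriority (hPdiag : ∀ i, Pbar i i = 0) {t : ℕ}
    (ht : t < T) {i : Fin n} (h : ¬ AbsolutePriority α Pbar e P u t i) :
    0 < w (t + 1) i ∧ ∃ j, P t i j < resLiab α Pbar P t i j := by
  have hid := hfeas.netWorth_succ hPdiag ht i
  have hw := hfeas.netWorth_nonneg (s := t + 1) ht i
  have hlt := lt_of_le_of_ne (le_min (sum_le_sum fun j _ => hfeas.le_resLiab ht i j)
    (by linarith)) h
  obtain ⟨j, -, hj⟩ := exists_lt_of_sum_lt (hlt.trans_le (min_le_left _ _))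
  exact ⟨by linarith [hlt.trans_le (min_le_right _ _)], j, hj⟩

theorem eq_resLiab_of_absolutePriority (hPdiag : ∀ i, Pbar i i = 0) {σ : ℕ} (hσ : σ < T)
    {z : Fin n} (hprio : AbsolutePriority α Pbar e P u σ z) (hw : 0 < w (σ + 1) z) (j : Fin n) :
    P σ z j = resLiab α Pbar P σ z j := by
  have hid := hfeas.netWorth_succ hPdiag hσ z
  have hsum : ∑ j, P σ z j = ∑ j, resLiab α Pbar P σ z j := by
    unfold AbsolutePriority at hprio
    rw [hprio, min_eq_left]
    by_contra! hlt
    rw [min_eq_right hlt.le] at hprio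
    linarith
  exact (sum_eq_sum_iff_of_le fun j _ => hfeas.le_resLiab hσ z j).1 hsum j (mem_univ j)

theorem netWorth_mono_of_eq_resLiab (hα : 0 ≤ α) (he : ∀ t, t < T → ∀ i, 0 ≤ e t i) {σ : ℕ}
    {z : Fin n} (hfull : ∀ j, P σ z j = resLiab α Pbar P σ z j) {s : ℕ} (hσs : σ < s)
    (hs : s ≤ T) : w (σ + 1) z ≤ w s z :=
  hfeas.netWorth_mono he hσs hs fun r h1 h2 j => le_antisymm
    (by simpa [hfull j] using hfeas.le_pow_mul_sub hα h1 (h2.trans_le hs) z j)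
    (hfeas.nonneg (h2.trans_le hs) z j)

theorem exists_reachable_solvent (he : ∀ t, t < T → ∀ i, 0 ≤ e t i) {σ : ℕ} (hσ : σ < T)
    {i k : Fin n} (hpay : 0 < P σ i k) :
    ∃ z, Relation.ReflTransGen (fun a b => w (σ + 1) a = 0 ∧ 0 < P σ a b) k z ∧
      (z = i ∨ 0 < w (σ + 1) z) := by
  classical
  by_contra! hbroke
  set S := univ.filter (Relation.ReflTransGen (fun a b => w (σ + 1) a = 0 ∧ 0 < P σ a b) k)
  have hS (v : Fin n) (hv : v ∈ S) : v ≠ i ∧ w (σ + 1) v = 0 := by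
    have h := hbroke v (mem_filter.1 hv).2
    exact ⟨h.1, le_antisymm h.2 (hfeas.netWorth_nonneg hσ v)⟩
  have hclosed (v : Fin n) (hv : v ∈ S) (j : Fin n) (hj : j ∈ Sᶜ) : P σ v j = 0 := by
    refine le_antisymm (not_lt.1 fun hpos => mem_compl.1 hj ?_) (hfeas.nonneg hσ v j)
    exact mem_filter.2 ⟨mem_univ j, (mem_filter.1 hv).2.tail ⟨(hS v hv).2, hpos⟩⟩
  have hkS : k ∈ S := mem_filter.2 ⟨mem_univ k, .refl⟩
  have hiS : i ∈ Sᶜ := mem_compl.2 fun hi => (hS i hi).1 rfl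
  have hbalance : ∑ v ∈ S, w (σ + 1) v
      = ∑ v ∈ S, (w σ v + (e σ v + u σ v)) + ∑ v ∈ S, ∑ j ∈ Sᶜ, P σ j v := by
    simp only [netWorth_succ_eq_add_netInflow, sum_add_distrib, sum_netInflow]
    congr 1
    refine sum_congr rfl fun v hv => sum_congr rfl fun j hj => ?_
    rw [hclosed v hv j hj, sub_zero]
  have hzero : ∑ v ∈ S, w (σ + 1) v = 0 := sum_eq_zero fun v hv => (hS v hv).2
  have hstart : 0 ≤ ∑ v ∈ S, (w σ v + (e σ v + u σ v)) := sum_nonneg fun v _ =>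
    add_nonneg (hfeas.netWorth_nonneg hσ.le v)
      (add_nonneg (he σ hσ v) ((hfeas σ hσ).2.1 v))
  have hinflow : P σ i k ≤ ∑ v ∈ S, ∑ j ∈ Sᶜ, P σ j v :=
    (single_le_sum (fun j _ => hfeas.nonneg hσ j k) hiS).trans
      (single_le_sum (fun v _ => sum_nonneg fun j _ => hfeas.nonneg hσ j v) hkS)
  linarith

theorem exists_flow_to_solvent (he : ∀ t, t < T → ∀ i, 0 ≤ e t i) {σ : ℕ} (hσ : σ < T)
    {i k : Fin n} (hpay : 0 < P σ i k) :
    ∃ z M, (z = i ∨ 0 < w (σ + 1) z) ∧ (∀ a b, 0 ≤ M a b) ∧ (∀ a b, 0 < M a b → 0 < P σ a b) ∧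
      (∀ v, netInflow M v = (if v = z then 1 else 0) - (if v = i then 1 else 0)) ∧
      0 < ∑ a, ∑ b, M a b := by
  obtain ⟨z, hreach, hz⟩ := hfeas.exists_reachable_solvent he hσ hpay
  obtain ⟨M, hM, hsupp, hflow⟩ := exists_flow_of_reflTransGen hreach
  have hnonneg (a b : Fin n) : 0 ≤ (Matrix.single i k 1 + M : Matrix (Fin n) (Fin n) ℝ) a b :=
    add_nonneg (single_nonneg zero_le_one i k a b) (hM a b)
  refine ⟨z, Matrix.single i k 1 + M, hz, hnonneg, fun a b hab => ?_, fun v => ?_, ?_⟩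
  · by_cases hik : i = a ∧ k = b
    · obtain ⟨rfl, rfl⟩ := hik
      exact hpay
    · refine (hsupp a b fun h => hab.ne' ?_).2
      simp [Matrix.single_apply_of_ne _ _ _ _ _ hik, h]
  · rw [netInflow_add, netInflow_single, hflow]
    ring
  · refine sum_pos' (fun a _ => sum_nonneg fun b _ => hnonneg a b) ⟨i, mem_univ i, ?_⟩
    refine sum_pos' (fun b _ => hnonneg i b) ⟨k, mem_univ k, ?_⟩
    simpa using add_pos_of_pos_of_nonneg one_pos (hM i k)

variable {t σ : ℕ} {i z : Fin n} {δ : ℝ}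

theorem netWorth_pulse_nonneg (hα : 1 ≤ α) (he : ∀ t, t < T → ∀ i, 0 ≤ e t i) (htσ : t < σ)
    (hδ : 0 < δ) (hidle : ∀ r, t < r → r < σ → ∀ j, P r i j = 0) (hwi : δ ≤ w (t + 1) i)
    (hwz : z ≠ i → ∀ s, σ < s → s ≤ T → α ^ (σ - t) * δ ≤ w s z) {s : ℕ} (hs : s ≤ T)
    (v : Fin n) :
    0 ≤ w s v + ((if t < s then δ else 0) - (if σ < s then α ^ (σ - t) * δ else 0))
      * ((if v = z then 1 else 0) - (if v = i then 1 else 0)) := by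
  have hw := hfeas.netWorth_nonneg hs v
  by_cases hzi : z = i
  · subst hzi
    simpa using hw
  have hpow : 1 ≤ α ^ (σ - t) := one_le_pow₀ hα
  by_cases hvi : v = i
  · subst hvi
    have hmono (h1 : t < s) (h2 : s ≤ σ) : δ ≤ w s v := hwi.trans <|
      hfeas.netWorth_mono he h1 hs fun r hr1 hr2 => hidle r hr1 (by omega)
    simp only [if_neg (Ne.symm hzi), if_true]
    split_ifs with h1 h2 h2
    · nlinarith
    · linarith [hmono h1 (not_lt.1 h2)]
    · omega
    · linarith
  by_cases hvz : v = z
  · subst hvz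
    simp only [if_neg hvi, if_true]
    split_ifs with h1 h2 h2
    · linarith [hwz hzi s h2 hs]
    all_goals linarith
  · simpa [hvi, hvz] using hw

theorem add_pulse (hα : 1 ≤ α) (he : ∀ t, t < T → ∀ i, 0 ≤ e t i) (htσ : t < σ) (hδ : 0 < δ)
    {M : Matrix (Fin n) (Fin n) ℝ} (hM : ∀ a b, 0 ≤ M a b)
    (hflow : ∀ v, netInflow M v = (if v = z then 1 else 0) - (if v = i then 1 else 0))
    (hcut : σ < T → ∀ a b, α ^ (σ - t) * δ * M a b ≤ P σ a b)
    (hslack : ∀ s, t ≤ s → s < σ → s < T → ∀ a b,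
      α ^ (s - t) * δ * M a b ≤ resLiab α Pbar P s a b - P s a b)
    (hidle : ∀ r, t < r → r < σ → ∀ j, P r i j = 0) (hwi : δ ≤ w (t + 1) i)
    (hwz : z ≠ i → ∀ s, σ < s → s ≤ T → α ^ (σ - t) * δ ≤ w s z) :
    FeasibleFree T α Pbar e F (fun r => P r + pulse α δ t σ r • M) u := by
  intro r hr
  refine ⟨fun a b => ?_, (hfeas r hr).2.1, fun a b => ?_, fun v => ?_, (hfeas r hr).2.2.2.2⟩
  · have hP := hfeas.nonneg hr a b
    simp only [Matrix.add_apply, Matrix.smul_apply, smul_eq_mul, pulse]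
    split_ifs with h1 h2
    · nlinarith [hM a b]
    · subst h2
      linarith [hcut hr a b]
    · simpa using hP
  · have hmove : (compoundedSum α (pulse α δ t σ) r + pulse α δ t σ r) * M a b
        ≤ resLiab α Pbar P r a b - P r a b := by
      rw [compoundedSum_pulse_add_pulse htσ]
      split_ifs with h
      · exact hslack r h.1 h.2 hr a b
      · simpa using hfeas.le_resLiab hr a b
    rw [resLiab_add_smul]
    simp only [Matrix.sub_apply, Matrix.add_apply, Matrix.smul_apply, smul_eq_mul]
    linarith
  · rw [netWorth_add_smul, sum_range_pulse htσ, hflow]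
    exact hfeas.netWorth_pulse_nonneg hα he htσ hδ hidle hwi hwz hr v

end FeasibleFree

namespace OptimalFree
variable (hopt : OptimalFree T α η γ Pbar e F P u) (hα : 1 ≤ α) (he : ∀ t, t < T → ∀ i, 0 ≤ e t i)
  (hη0 : 0 ≤ η) (hη1 : η < 1)
include hopt hα he hη0 hη1

theorem exists_later_payment {t : ℕ} (ht : t < T) {i j : Fin n} (hw : 0 < w (t + 1) i)
    (hslack : P t i j < resLiab α Pbar P t i j) :
    ∃ σ, t < σ ∧ σ < T ∧ ∃ k, 0 < P σ i k := by
  by_contra! hnone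
  have hidle (r : ℕ) (h1 : t < r) (h2 : r < T) (k : Fin n) : P r i k = 0 :=
    le_antisymm (hnone r h1 h2 k) (hopt.1.nonneg h2 i k)
  set δ : ℝ := min (w (t + 1) i) (resLiab α Pbar P t i j - P t i j)
  have hδ : 0 < δ := lt_min hw (sub_pos.2 hslack)
  have hsingle (s : ℕ) (hts : t ≤ s) (hsT : s < T) (a b : Fin n) :
      α ^ (s - t) * δ * Matrix.single i j 1 a b ≤ resLiab α Pbar P s a b - P s a b := by
    by_cases hab : i = a ∧ j = b
    · obtain ⟨rfl, rfl⟩ := hab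
      rw [Matrix.single_apply_same, mul_one]
      rcases hts.eq_or_lt with rfl | hts
      · rw [Nat.sub_self, pow_zero, one_mul]
        exact min_le_right _ _
      · rw [resLiab_eq_pow_mul_sub hts fun q h1 h2 => hidle q h1 (h2.trans hsT) j,
          hidle s hts hsT j, sub_zero]
        exact mul_le_mul_of_nonneg_left (min_le_right _ _) (by positivity)
    · simpa [Matrix.single_apply_of_ne _ _ _ _ _ hab] using hopt.1.le_resLiab hsT a b
  have hpos : 0 < ∑ a, ∑ b, Matrix.single i j (1 : ℝ) a b := by
    simp only [Matrix.single_apply, ite_and]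
    simp
  refine hopt.not_feasibleFree_add_pulse (zero_le_one.trans hα) hη0 hη1 ht ht hδ hpos
    (hopt.1.add_pulse hα he ht hδ (single_nonneg zero_le_one i j) (netInflow_single i j)
      (fun h => absurd h (lt_irrefl T)) (fun s h1 h2 _ => hsingle s h1 h2) hidle (min_le_left _ _)
      fun _ s h1 h2 => absurd h1 h2.not_gt)

theorem false_of_deferred_payment (hPdiag : ∀ i, Pbar i i = 0) {t σ : ℕ} (htσ : t < σ)
    (hσT : σ < T) {i k : Fin n} (hw : 0 < w (t + 1) i)
    (hidle : ∀ r, t < r → r < σ → ∀ j, P r i j = 0) (hpay : 0 < P σ i k)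
    (hprio : ∀ v, AbsolutePriority α Pbar e P u σ v) : False := by
  have hfeas := hopt.1
  have hα0 : 0 ≤ α := zero_le_one.trans hα
  obtain ⟨z, M, hz, hM, hsupp, hflow, hMpos⟩ := hfeas.exists_flow_to_solvent he hσT hpay
  have hpow : 0 < α ^ (σ - t) := by positivity
  obtain ⟨δ, ⟨hwi, hcut, hwz⟩, hδ⟩ : ∃ δ, (δ * 1 ≤ w (t + 1) i ∧
      (∀ a b, δ * (α ^ (σ - t) * M a b) ≤ P σ a b) ∧
      (z ≠ i → δ * α ^ (σ - t) ≤ w (σ + 1) z)) ∧ 0 < δ := by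
    refine (((eventually_mul_le hw.le fun _ => hw).and ((eventually_all.2 fun a =>
      eventually_all.2 fun b => eventually_mul_le (hfeas.nonneg hσT a b) fun h =>
        hsupp a b (pos_of_mul_pos_right h hpow.le)).and ?_)).and self_mem_nhdsWithin).exists
    exact eventually_imp_distrib_left.2 fun hzi =>
      eventually_mul_le (hfeas.netWorth_nonneg hσT z) fun _ => hz.resolve_left hzi
  refine hopt.not_feasibleFree_add_pulse hα0 hη0 hη1 (htσ.trans hσT) htσ hδ hMpos
    (hfeas.add_pulse hα he htσ hδ hM hflow (fun _ a b => by linarith [hcut a b])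
      (fun s hts hsσ _ a b => ?_) hidle (by linarith) fun hzi s h1 h2 => ?_)
  · refine le_of_mul_le_mul_left ?_ (pow_pos (zero_lt_one.trans_le hα) (σ - s))
    calc α ^ (σ - s) * (α ^ (s - t) * δ * M a b) = δ * (α ^ (σ - t) * M a b) := by
          rw [show σ - t = σ - s + (s - t) by omega, pow_add]
          ring
      _ ≤ P σ a b := hcut a b
      _ ≤ α ^ (σ - s) * (resLiab α Pbar P s a b - P s a b) :=
          hfeas.le_pow_mul_sub hα0 hsσ hσT a b
  · have hfull := hfeas.eq_resLiab_of_absolutePriority hPdiag hσT (hprio z) (hz.resolve_left hzi)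
    linarith [hwz hzi, hfeas.netWorth_mono_of_eq_resLiab hα0 he hfull h1 h2]

theorem absolutePriority (hPdiag : ∀ i, Pbar i i = 0) {t : ℕ} (ht : t < T) (i : Fin n) :
    AbsolutePriority α Pbar e P u t i := by
  classical
  by_contra hne
  obtain ⟨hw, j, hj⟩ := hopt.1.pos_netWorth_and_slack_of_not_absolutePriority hPdiag ht hne
  have hex := hopt.exists_later_payment hα he hη0 hη1 ht hw hj
  obtain ⟨htσ, hσT, k, hk⟩ := Nat.find_spec hex
  refine hopt.false_of_deferred_payment hα he hη0 hη1 hPdiag htσ hσT hw (fun r h1 h2 j => ?_) hk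
    fun v => absolutePriority hPdiag hσT v
  have hfirst := Nat.find_min hex h2
  push Not at hfirst
  exact le_antisymm (hfirst h1 (h2.trans hσT) j) (hopt.1.nonneg (h2.trans hσT) i j)
termination_by T - t

end OptimalFree
end FreePayments

theorem stmt0_absolute_priority_free_general (n T : ℕ)
    (α : ℝ) (hα : 1 ≤ α)
    (Pbar : Matrix (Fin n) (Fin n) ℝ)
    (hPdiag : ∀ i, Pbar i i = 0)
    (e : ℕ → Fin n → ℝ) (he : ∀ t, t < T → ∀ i, 0 ≤ e t i)
    (F : ℕ → ℝ)
    (η γ : ℝ) (hη0 : 0 ≤ η) (hη1 : η < 1)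
    (Pstar : ℕ → Matrix (Fin n) (Fin n) ℝ) (ustar : ℕ → Fin n → ℝ)
    (hopt : OptimalFree T α η γ Pbar e F Pstar ustar) :
    ∀ i : Fin n, ∀ t, t < T →
      ∑ j, Pstar t i j =
        min (∑ j, resLiab α Pbar Pstar t i j)
          (netWorth (fun s i => e s i + ustar s i) Pstar t i + (e t i + ustar t i)
            + ∑ j ∈ univ.erase i, Pstar t j i) :=
  fun i _ ht => hopt.absolutePriority hα he hη0 hη1 hPdiag ht i

theorem stmt0_absolute_priority_free (n T : ℕ) (hn : 1 ≤ n) (hT : 1 ≤ T)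
    (α : ℝ) (hα : 1 ≤ α)
    (Pbar : Matrix (Fin n) (Fin n) ℝ)
    (hPbar : ∀ i j, 0 ≤ Pbar i j) (hPdiag : ∀ i, Pbar i i = 0)
    (e : ℕ → Fin n → ℝ) (he : ∀ t, t < T → ∀ i, 0 ≤ e t i)
    (F : ℕ → ℝ) (hF : ∀ t, 0 ≤ F t) (hFmono : ∀ s t, s ≤ t → F s ≤ F t)
    (η γ : ℝ) (hη0 : 0 ≤ η) (hη1 : η < 1) (hγ : 0 < γ)
    (Pstar : ℕ → Matrix (Fin n) (Fin n) ℝ) (ustar : ℕ → Fin n → ℝ)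
    (hopt : OptimalFree T α η γ Pbar e F Pstar ustar) :
    ∀ i : Fin n, ∀ t, t < T →
      ∑ j, Pstar t i j =
        min (∑ j, resLiab α Pbar Pstar t i j)
          (netWorth (fun s i => e s i + ustar s i) Pstar t i + (e t i + ustar t i)
            + ∑ j ∈ univ.erase i, Pstar t j i) :=
  stmt0_absolute_priority_free_general n T α hα Pbar hPdiag e he F η γ hη0 hη1 Pstar ustar hopt
end
end

section
/- Let ([P*],[u*]) be an optimal process for the free-payments control problem with η∈[0,1) and γ>0. If the remaining budget bounds are constant from some period k on, i.e. F(k)=F(k+1)=…=F(T−1) for some k∈{0,…,T−2}, then there are no control actions after period k: u*(t)=0 for all t∈{k+1,…,T−1}. -/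
open Finset

noncomputable section

/-!
Suppose an optimal process injects `u t₀ i > 0` at some `t₀ > k`. If bank `i`'s net worth stayed
positive after `t₀`, a small part of that injection could simply be withdrawn, lowering the cost
by `γ ε`. So its net worth first returns to zero at some `s + 1 > t₀`, which forces `i` to make a
positive payment to some `j ≠ i` at time `s`. Since the budget is constant on `[k, T)`, part of the
injection can instead be made at time `k` and used by `i` for an advance payment `a` to `j`; this
reduces the residual liability `i → j` by `α ^ (t - k) a` for `k < t ≤ s`, and choosing
`α ^ (s - k) a = ε` lets `i` pay `ε` less at time `s`, the difference `ε - a` being injected into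
`j`. All constraints keep holding and the cost strictly drops, contradicting optimality.
-/

open Filter Topology

section Dynamics

variable {n : ℕ}

theorem netWorth_eq_sum (c : ℕ → Fin n → ℝ) (P : ℕ → Matrix (Fin n) (Fin n) ℝ) (t : ℕ)
    (i : Fin n) :
    netWorth c P t i = ∑ s ∈ range t, (c s i + ∑ j, P s j i - ∑ j, P s i j) := by
  induction t with
  | zero => rfl
  | succ t ih => rw [sum_range_succ, ← ih, netWorth]; ring

theorem netWorth_add (c c' : ℕ → Fin n → ℝ) (P Q : ℕ → Matrix (Fin n) (Fin n) ℝ) (t : ℕ)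
    (i : Fin n) :
    netWorth (c + c') (P + Q) t i = netWorth c P t i + netWorth c' Q t i := by
  simp only [netWorth_eq_sum, ← sum_add_distrib, Pi.add_apply, Matrix.add_apply]
  refine sum_congr rfl fun s _ => ?_
  rw [sum_add_distrib, sum_add_distrib]
  ring

theorem netWorth_inflow_add (e u v : ℕ → Fin n → ℝ) (P Q : ℕ → Matrix (Fin n) (Fin n) ℝ)
    (t : ℕ) (i : Fin n) :
    netWorth (fun s i => e s i + (u + v) s i) (P + Q) t i
      = netWorth (fun s i => e s i + u s i) P t i + netWorth v Q t i := by
  rw [← netWorth_add]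
  congr
  ext s l
  simp only [Pi.add_apply, add_assoc]

theorem exists_pos_payment_of_netWorth_succ_eq_zero (c : ℕ → Fin n → ℝ)
    (P : ℕ → Matrix (Fin n) (Fin n) ℝ) (s : ℕ) (i : Fin n)
    (hzero : netWorth c P (s + 1) i = 0) (hcash : 0 < netWorth c P s i + c s i)
    (hin : ∀ j, 0 ≤ P s j i) : ∃ j, 0 < P s i j := by
  by_contra! hout
  have hin_sum : 0 ≤ ∑ j, P s j i := sum_nonneg fun j _ => hin j
  have hout_sum : ∑ j, P s i j ≤ 0 := sum_nonpos fun j _ => hout j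
  rw [netWorth] at hzero
  linarith

theorem resLiab_add (α : ℝ) (Pbar : Matrix (Fin n) (Fin n) ℝ)
    (P Q : ℕ → Matrix (Fin n) (Fin n) ℝ) (t : ℕ) (i j : Fin n) :
    resLiab α Pbar (P + Q) t i j = resLiab α Pbar P t i j + resLiab α 0 Q t i j := by
  induction t with
  | zero => simp [resLiab]
  | succ t ih => simp only [resLiab, ih, Pi.add_apply, Matrix.add_apply]; ring

theorem resLiab_zero_eq_sum (α : ℝ) (Q : ℕ → Matrix (Fin n) (Fin n) ℝ) (t : ℕ) (i j : Fin n) :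
    resLiab α 0 Q t i j = -∑ s ∈ range t, α ^ (t - s) * Q s i j := by
  induction t with
  | zero => simp [resLiab]
  | succ t ih =>
    have hpow : ∀ s ∈ range t, α * (α ^ (t - s) * Q s i j) = α ^ (t + 1 - s) * Q s i j := by
      intro s hs
      rw [show t + 1 - s = t - s + 1 by simp at hs; omega, pow_succ]
      ring
    simp only [resLiab]
    rw [ih, sum_range_succ, Nat.add_sub_cancel_left, pow_one, ← sum_congr rfl hpow, ← mul_sum]
    ring

theorem budget_add (u v : ℕ → Fin n → ℝ) (t : ℕ) :
    budget (u + v) t = budget u t + budget v t := by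
  simp only [budget, Pi.add_apply, sum_add_distrib]

theorem netWorth_single_injection (k : ℕ) (i : Fin n) (x : ℝ) (r : ℕ) (l : Fin n) :
    netWorth (Pi.single k (Pi.single i x)) 0 r l = if k < r ∧ l = i then x else 0 := by
  simp [netWorth_eq_sum, Pi.single_apply, ite_apply, ite_and]

theorem budget_single_injection (k : ℕ) (i : Fin n) (x : ℝ) (t : ℕ) :
    budget (Pi.single k (Pi.single i x)) t = if k ≤ t then x else 0 := by
  simp [budget, Pi.single_apply, ite_apply]

theorem budget_add_le_budget {u : ℕ → Fin n → ℝ} {r t : ℕ} (hrt : r < t)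
    (hu : ∀ s ≤ t, ∀ i, 0 ≤ u s i) (i : Fin n) : budget u r + u t i ≤ budget u t := by
  have hsub : insert t (range (r + 1)) ⊆ range (t + 1) := by
    intro s hs
    simp only [mem_insert, mem_range] at hs ⊢
    omega
  calc budget u r + u t i ≤ budget u r + ∑ l, u t l := by
        gcongr
        exact single_le_sum (fun l _ => hu t le_rfl l) (mem_univ i)
    _ = ∑ s ∈ insert t (range (r + 1)), ∑ l, u s l := by
        rw [sum_insert (by simp; omega), add_comm, budget]
    _ ≤ budget u t := sum_le_sum_of_subset_of_nonneg hsub fun s hs _ =>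
        sum_nonneg fun l _ => hu s (by simp at hs; omega) l

theorem costFree_lt_of_resLiab_lt {T : ℕ} {α η γ : ℝ} {Pbar : Matrix (Fin n) (Fin n) ℝ}
    {P P' : ℕ → Matrix (Fin n) (Fin n) ℝ} {u u' : ℕ → Fin n → ℝ}
    (hα : 0 < α) (hη0 : 0 ≤ η) (hη1 : η < 1)
    (hle : ∀ t, 0 < t → t ≤ T → ∀ i j, resLiab α Pbar P' t i j ≤ resLiab α Pbar P t i j)
    {s : ℕ} {i j : Fin n} (hs : 0 < s) (hsT : s ≤ T)
    (hlt : resLiab α Pbar P' s i j < resLiab α Pbar P s i j)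
    (hB : budget u' (T - 1) = budget u (T - 1)) :
    costFree T α η γ Pbar P' u' < costFree T α η γ Pbar P u := by
  have hslack : ∀ Q : ℕ → Matrix (Fin n) (Fin n) ℝ,
      ∑ t ∈ range T, ∑ i, ∑ j, (resLiab α Pbar Q t i j - Q t i j)
        = α⁻¹ * ∑ t ∈ range T, ∑ i, ∑ j, resLiab α Pbar Q (t + 1) i j := by
    intro Q
    simp only [resLiab, mul_sum, inv_mul_cancel_left₀ hα.ne']
  have hsum : ∑ t ∈ range T, ∑ i, ∑ j, resLiab α Pbar P' (t + 1) i j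
      < ∑ t ∈ range T, ∑ i, ∑ j, resLiab α Pbar P (t + 1) i j := by
    refine sum_lt_sum (fun t ht => sum_le_sum fun i _ => sum_le_sum fun j _ =>
      hle (t + 1) t.succ_pos (by simp at ht; omega) i j) ⟨s - 1, by simp; omega, ?_⟩
    rw [Nat.sub_add_cancel hs]
    refine sum_lt_sum (fun i _ => sum_le_sum fun j _ =>
      hle s hs hsT i j) ⟨i, mem_univ _, ?_⟩
    exact sum_lt_sum (fun j _ => hle s hs hsT i j) ⟨j, mem_univ _, hlt⟩
  have hfinal : ∑ i, ∑ j, resLiab α Pbar P' T i j ≤ ∑ i, ∑ j, resLiab α Pbar P T i j :=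
    sum_le_sum fun i _ => sum_le_sum fun j _ => hle T (by omega) le_rfl i j
  simp only [costFree]
  rw [hslack, hslack, hB]
  have h1 := mul_lt_mul_of_pos_left hsum (mul_pos (sub_pos.2 hη1) (inv_pos.2 hα))
  have h2 := mul_le_mul_of_nonneg_left hfinal hη0
  linarith

end Dynamics

theorem eventually_le_of_pos {x : ℝ} (hx : 0 < x) : ∀ᶠ ε in 𝓝[>] (0 : ℝ), ε ≤ x :=
  nhdsWithin_le_nhds ((eventually_lt_nhds hx).mono fun _ => le_of_lt)

theorem exists_first_succ_of_exists {p : ℕ → Prop} {m T : ℕ} (h : ∃ r, m < r ∧ r ≤ T ∧ p r) :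
    ∃ s, m ≤ s ∧ s < T ∧ p (s + 1) ∧ ∀ r, m < r → r ≤ s → ¬ p r := by
  classical
  obtain ⟨hm, hT, hp⟩ := Nat.find_spec h
  refine ⟨Nat.find h - 1, by omega, by omega, by rwa [Nat.sub_add_cancel (by omega)], ?_⟩
  intro r hmr hrs hpr
  exact Nat.find_min h (by omega : r < Nat.find h) ⟨hmr, by omega, hpr⟩

section Feasibility

variable {n T : ℕ} {α : ℝ} {Pbar : Matrix (Fin n) (Fin n) ℝ} {e : ℕ → Fin n → ℝ} {F : ℕ → ℝ}
  {P : ℕ → Matrix (Fin n) (Fin n) ℝ} {u : ℕ → Fin n → ℝ}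

theorem FeasibleFree.netWorth_nonneg_s8 (hfeas : FeasibleFree T α Pbar e F P u) {t : ℕ}
    (ht : t ≤ T) (i : Fin n) : 0 ≤ netWorth (fun s i => e s i + u s i) P t i := by
  cases t with
  | zero => exact le_rfl
  | succ t => exact (hfeas t (by omega)).2.2.2.1 i

theorem FeasibleFree.payment_self_eq_zero (hfeas : FeasibleFree T α Pbar e F P u) {i : Fin n}
    (hdiag : Pbar i i = 0) {t : ℕ} (ht : t < T) : P t i i = 0 := by
  have hsandwich : ∀ t < T, resLiab α Pbar P t i i = 0 → P t i i = 0 := fun t ht hR =>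
    le_antisymm (hR ▸ (hfeas t ht).2.2.1 i i) ((hfeas t ht).1 i i)
  have hR : ∀ t < T, resLiab α Pbar P t i i = 0 := by
    intro t ht
    induction t with
    | zero => exact hdiag
    | succ t ih =>
      have hRt := ih (by omega)
      simp only [resLiab, hRt, hsandwich t (by omega) hRt, sub_zero, mul_zero]
  exact hsandwich t ht (hR t ht)

theorem FeasibleFree.resLiab_le_pow_mul_slack (hfeas : FeasibleFree T α Pbar e F P u)
    (hα : 0 ≤ α) {t s : ℕ} (hts : t < s) (hsT : s ≤ T) (i j : Fin n) :
    resLiab α Pbar P s i j ≤ α ^ (s - t) * (resLiab α Pbar P t i j - P t i j) := by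
  induction s, Nat.succ_le_of_lt hts using Nat.le_induction with
  | base => simp [resLiab]
  | succ s hts ih =>
    have hP := (hfeas s (by omega)).1 i j
    calc resLiab α Pbar P (s + 1) i j = α * (resLiab α Pbar P s i j - P s i j) := rfl
      _ ≤ α * resLiab α Pbar P s i j := by nlinarith
      _ ≤ α * (α ^ (s - t) * (resLiab α Pbar P t i j - P t i j)) :=
          mul_le_mul_of_nonneg_left (ih (by omega) (by omega)) hα
      _ = α ^ (s + 1 - t) * (resLiab α Pbar P t i j - P t i j) := by
          rw [show s + 1 - t = s - t + 1 by omega, pow_succ]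
          ring

theorem FeasibleFree.add_withdrawal (hfeas : FeasibleFree T α Pbar e F P u) {t₀ : ℕ} {i : Fin n}
    {ε : ℝ} (hε : 0 ≤ ε) (hεu : ε ≤ u t₀ i)
    (hεw : ∀ r, t₀ < r → r ≤ T → ε ≤ netWorth (fun s i => e s i + u s i) P r i) :
    FeasibleFree T α Pbar e F P (u + Pi.single t₀ (Pi.single i (-ε))) := by
  intro t ht
  obtain ⟨hP, hu, hPR, hw, hB⟩ := hfeas t ht
  refine ⟨hP, fun l => ?_, hPR, fun l => ?_, ?_⟩
  · simp only [Pi.add_apply, Pi.single_apply, ite_apply, Pi.zero_apply]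
    split_ifs with h₁ h₂
    · subst h₁ h₂; linarith
    all_goals linarith [hu l]
  · have hsplit := netWorth_inflow_add e u (Pi.single t₀ (Pi.single i (-ε))) P 0 (t + 1) l
    rw [add_zero] at hsplit
    rw [hsplit, netWorth_single_injection]
    split_ifs with h
    · obtain ⟨h₁, rfl⟩ := h
      linarith [hεw (t + 1) h₁ (by omega)]
    · linarith [hw l]
  · rw [budget_add, budget_single_injection]
    split_ifs <;> linarith

theorem OptimalFree.exists_netWorth_nonpos {η γ : ℝ} (hopt : OptimalFree T α η γ Pbar e F P u)
    (hγ : 0 < γ) {t₀ : ℕ} {i : Fin n} (ht₀ : t₀ < T) (hu : 0 < u t₀ i) :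
    ∃ r, t₀ < r ∧ r ≤ T ∧ netWorth (fun s i => e s i + u s i) P r i ≤ 0 := by
  by_contra! hpos
  obtain ⟨ε, hε, hεu, hεw⟩ := (eventually_mem_nhdsWithin.and ((eventually_le_of_pos hu).and
    ((eventually_all_finset (Ioc t₀ T)).2 fun r hr =>
      eventually_le_of_pos (hpos r (mem_Ioc.1 hr).1 (mem_Ioc.1 hr).2)))).exists
  have hcost := hopt.2 _ _ (hopt.1.add_withdrawal (le_of_lt hε) hεu
    fun r h₁ h₂ => hεw r (mem_Ioc.2 ⟨h₁, h₂⟩))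
  simp only [costFree, budget_add, budget_single_injection, if_pos (Nat.le_sub_one_of_lt ht₀)] at hcost
  nlinarith [mul_pos hγ (Set.mem_Ioi.1 hε)]

end Feasibility

section Prepayment

variable {n : ℕ}

def prepayPayments (i j : Fin n) (k s : ℕ) (a ε : ℝ) : ℕ → Matrix (Fin n) (Fin n) ℝ :=
  fun r => Matrix.single i j ((if r = k then a else 0) - if r = s then ε else 0)

def prepayInjections (i j : Fin n) (k t₀ s : ℕ) (a ε : ℝ) : ℕ → Fin n → ℝ :=
  fun r => Pi.single i ((if r = k then a else 0) - if r = t₀ then ε else 0) +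
    Pi.single j (if r = s then ε - a else 0)

variable {i j : Fin n} {k t₀ s : ℕ} {a ε : ℝ}

theorem netWorth_prepay (hij : i ≠ j) (t : ℕ) (l : Fin n) :
    netWorth (prepayInjections i j k t₀ s a ε) (prepayPayments i j k s a ε) t l
      = (if l = i then (if s < t then ε else 0) - if t₀ < t then ε else 0 else 0)
        + if l = j then (if k < t then a else 0) - if s < t then a else 0 else 0 := by
  simp only [netWorth_eq_sum, prepayInjections, Pi.add_apply, Pi.single_apply, prepayPayments,
    Matrix.single_apply, ite_and, sum_ite_eq, mem_univ, ↓reduceIte, sum_ite_irrel, sum_const_zero,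
    sum_sub_distrib, sum_add_distrib, sum_ite_eq', mem_range]
  rcases eq_or_ne l i with rfl | hli
  · simp only [↓reduceIte, hij, hij.symm, add_zero]
    split_ifs <;> ring
  rcases eq_or_ne l j with rfl | hlj
  · simp only [↓reduceIte, hli, hli.symm, zero_add, sub_zero]
    split_ifs <;> ring
  simp [hli, hlj, hli.symm, hlj.symm]

theorem resLiab_zero_prepayPayments {α : ℝ} (hks : k ≤ s) (hε : α ^ (s - k) * a = ε)
    (t : ℕ) (l m : Fin n) :
    resLiab α 0 (prepayPayments i j k s a ε) t l m
      = if l = i ∧ m = j ∧ k < t ∧ t ≤ s then -(α ^ (t - k) * a) else 0 := by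
  have hpow : s < t → α ^ (t - s) * ε = α ^ (t - k) * a := fun hst => by
    rw [← hε, ← mul_assoc, ← pow_add, Nat.sub_add_sub_cancel hst.le hks]
  simp only [resLiab_zero_eq_sum, prepayPayments, Matrix.single_apply, mul_ite, mul_zero,
    mul_sub, sum_ite_irrel, sum_sub_distrib, sum_ite_eq', mem_range, sum_const_zero]
  rcases eq_or_ne l i with rfl | hli
  · rcases eq_or_ne m j with rfl | hmj
    · by_cases hst : s < t
      · simp [hst, not_le.2 hst, hpow hst, hks.trans_lt hst]
      · simp only [hst, not_lt.1 hst, if_false, sub_zero, true_and, and_true]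
        split_ifs <;> simp
    · simp [hmj, Ne.symm hmj]
  · simp [hli, Ne.symm hli]

theorem budget_prepayInjections (t : ℕ) :
    budget (prepayInjections i j k t₀ s a ε) t
      = (if k ≤ t then a else 0) - (if t₀ ≤ t then ε else 0) + if s ≤ t then ε - a else 0 := by
  simp [budget, prepayInjections, sum_add_distrib, sum_sub_distrib]

variable {T : ℕ} {α : ℝ} {Pbar : Matrix (Fin n) (Fin n) ℝ} {e : ℕ → Fin n → ℝ} {F : ℕ → ℝ}
  {P : ℕ → Matrix (Fin n) (Fin n) ℝ} {u : ℕ → Fin n → ℝ}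

theorem FeasibleFree.add_prepay_le_resLiab (hfeas : FeasibleFree T α Pbar e F P u)
    (hα : 0 < α) (hks : k < s) (hsT : s < T) (hε : α ^ (s - k) * a = ε) (hεP : ε ≤ P s i j)
    {r : ℕ} (hr : r < T) (l m : Fin n) :
    (P + prepayPayments i j k s a ε) r l m
      ≤ resLiab α Pbar (P + prepayPayments i j k s a ε) r l m := by
  have hslack : ∀ r, k ≤ r → r < s → α ^ (r - k) * a ≤ resLiab α Pbar P r i j - P r i j := by
    intro r hkr hrs
    refine le_of_mul_le_mul_left ?_ (pow_pos hα (s - r))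
    calc α ^ (s - r) * (α ^ (r - k) * a) = ε := by
          rw [← hε, ← mul_assoc, ← pow_add, Nat.sub_add_sub_cancel hrs.le hkr]
      _ ≤ resLiab α Pbar P s i j := hεP.trans ((hfeas s hsT).2.2.1 i j)
      _ ≤ _ := hfeas.resLiab_le_pow_mul_slack hα.le hrs hsT.le i j
  have hPR := (hfeas r hr).2.2.1 l m
  rw [resLiab_add, resLiab_zero_prepayPayments hks.le hε]
  simp only [Pi.add_apply, Matrix.add_apply, prepayPayments, Matrix.single_apply]
  by_cases hlm : l = i ∧ m = j
  · obtain ⟨rfl, rfl⟩ := hlm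
    simp only [true_and]
    rcases lt_trichotomy r k with hrk | rfl | hkr
    · simp only [↓reduceIte, hrk.ne, (hrk.trans hks).ne, sub_self, add_zero, hrk.not_gt, false_and]
      linarith
    · have := hslack r le_rfl hks
      simp only [Nat.sub_self, pow_zero, one_mul] at this
      simp only [↓reduceIte, hks.ne, sub_zero, lt_self_iff_false, false_and, add_zero]
      linarith
    · rcases lt_trichotomy r s with hrs | rfl | hsr
      · have := hslack r hkr.le hrs
        simp only [↓reduceIte, hkr.ne', hrs.ne, sub_self, add_zero, hkr, hrs.le, and_self,
          le_add_neg_iff_add_le]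
        linarith
      · simpa [hkr, hkr.ne', hε] using hPR
      · simp only [↓reduceIte, hkr.ne', hsr.ne', sub_self, add_zero, hsr.not_ge, and_false]
        linarith
  · have hlm' : ¬(i = l ∧ j = m) := fun h => hlm ⟨h.1.symm, h.2.symm⟩
    rw [if_neg hlm', if_neg fun h => hlm ⟨h.1, h.2.1⟩]
    simpa using hPR

theorem FeasibleFree.add_prepay (hfeas : FeasibleFree T α Pbar e F P u) (hα : 1 ≤ α)
    (hij : i ≠ j) (hkt : k < t₀) (hts : t₀ ≤ s) (hsT : s < T) (ha : 0 ≤ a)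
    (hε : α ^ (s - k) * a = ε) (hεu : ε ≤ u t₀ i) (hεP : ε ≤ P s i j)
    (hεw : ∀ r, t₀ < r → r ≤ s → ε ≤ netWorth (fun s i => e s i + u s i) P r i)
    (hF : ∀ r, k ≤ r → r < t₀ → F t₀ ≤ F r) :
    FeasibleFree T α Pbar e F (P + prepayPayments i j k s a ε)
      (u + prepayInjections i j k t₀ s a ε) := by
  have haε : a ≤ ε := hε ▸ le_mul_of_one_le_left ha (one_le_pow₀ hα)
  intro r hr
  obtain ⟨hP, hu, -, hw, hB⟩ := hfeas r hr
  refine ⟨fun l m => ?_, fun l => ?_,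
    hfeas.add_prepay_le_resLiab (by linarith) (by omega) hsT hε hεP hr, fun l => ?_, ?_⟩
  · simp only [Pi.add_apply, Matrix.add_apply, prepayPayments, Matrix.single_apply]
    rcases eq_or_ne r s with rfl | hrs
    · simp only [(show r ≠ k by omega), if_true, if_false, zero_sub]
      split_ifs with hlm
      · obtain ⟨rfl, rfl⟩ := hlm
        linarith
      · linarith [hP l m]
    · simp only [hrs, if_false, sub_zero]
      split_ifs <;> linarith [hP l m]
  · simp only [Pi.add_apply, prepayInjections, Pi.single_apply]
    by_cases hc : r = t₀ ∧ l = i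
    · obtain ⟨rfl, rfl⟩ := hc
      simp only [↓reduceIte, (show r ≠ k by omega), zero_sub, hij, add_zero, le_add_neg_iff_add_le,
        zero_add]
      linarith
    · split_ifs <;> first | linarith [hu l] | tauto
  · rw [netWorth_inflow_add, netWorth_prepay hij]
    have hwl := hw l
    by_cases hli : l = i
    · subst hli
      simp only [if_true, if_neg hij, add_zero]
      by_cases hmid : t₀ < r + 1 ∧ r + 1 ≤ s
      · rw [if_neg (by omega), if_pos hmid.1]
        linarith [hεw (r + 1) hmid.1 hmid.2]
      · split_ifs <;> first | omega | linarith
    · simp only [if_neg hli, zero_add]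
      split_ifs <;> first | omega | linarith
  · rw [budget_add, budget_prepayInjections]
    by_cases hmid : k ≤ r ∧ r < t₀
    · rw [if_pos hmid.1, if_neg (by omega), if_neg (by omega)]
      have := budget_add_le_budget hmid.2 (fun s hs l => (hfeas s (by omega)).2.1 l) i
      linarith [(hfeas t₀ (by omega)).2.2.2.2, hF r hmid.1 hmid.2]
    · split_ifs <;> first | omega | linarith

theorem costFree_add_prepay_lt {η γ : ℝ} (hα : 0 < α) (hη0 : 0 ≤ η) (hη1 : η < 1)
    (hkt : k < t₀) (hts : t₀ ≤ s) (hsT : s < T) (ha : 0 < a) (hε : α ^ (s - k) * a = ε) :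
    costFree T α η γ Pbar (P + prepayPayments i j k s a ε)
        (u + prepayInjections i j k t₀ s a ε)
      < costFree T α η γ Pbar P u := by
  have hks : k < s := hkt.trans_le hts
  have hle : ∀ t, 0 < t → t ≤ T → ∀ l m,
      resLiab α Pbar (P + prepayPayments i j k s a ε) t l m ≤ resLiab α Pbar P t l m := by
    intro t _ _ l m
    rw [resLiab_add, resLiab_zero_prepayPayments hks.le hε]
    split_ifs
    · linarith [mul_pos (pow_pos hα (t - k)) ha]
    · linarith
  refine costFree_lt_of_resLiab_lt hα hη0 hη1 hle (s := s) (i := i) (j := j) (by omega) hsT.le ?_ ?_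
  · rw [resLiab_add, resLiab_zero_prepayPayments hks.le hε, if_pos ⟨rfl, rfl, hks, le_rfl⟩]
    linarith [mul_pos (pow_pos hα (s - k)) ha]
  · rw [budget_add, budget_prepayInjections, if_pos (by omega), if_pos (by omega), if_pos (by omega)]
    ring

end Prepayment

theorem OptimalFree.netWorth_succ_ne_zero {n T : ℕ} {α η γ : ℝ}
    {Pbar : Matrix (Fin n) (Fin n) ℝ} {e : ℕ → Fin n → ℝ} {F : ℕ → ℝ}
    {P : ℕ → Matrix (Fin n) (Fin n) ℝ} {u : ℕ → Fin n → ℝ}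
    (hopt : OptimalFree T α η γ Pbar e F P u) (hα : 1 ≤ α) (hη0 : 0 ≤ η) (hη1 : η < 1)
    {i : Fin n} {k t₀ s : ℕ} (hdiag : Pbar i i = 0) (he : 0 ≤ e s i) (hkt : k < t₀)
    (hts : t₀ ≤ s) (hsT : s < T) (hu : 0 < u t₀ i)
    (hpos : ∀ r, t₀ < r → r ≤ s → 0 < netWorth (fun s i => e s i + u s i) P r i)
    (hF : ∀ r, k ≤ r → r < t₀ → F t₀ ≤ F r) :
    netWorth (fun s i => e s i + u s i) P (s + 1) i ≠ 0 := by
  intro hzero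
  have hfeas := hopt.1
  have hcash : 0 < netWorth (fun s i => e s i + u s i) P s i + (e s i + u s i) := by
    have hus := (hfeas s hsT).2.1 i
    rcases hts.lt_or_eq with hlt | rfl
    · linarith [hpos s hlt le_rfl]
    · linarith [hfeas.netWorth_nonneg_s8 hsT.le i]
  obtain ⟨j, hj⟩ := exists_pos_payment_of_netWorth_succ_eq_zero _ _ s i hzero hcash
    fun l => (hfeas s hsT).1 l i
  have hij : i ≠ j := by
    rintro rfl
    exact hj.ne' (hfeas.payment_self_eq_zero hdiag hsT)
  obtain ⟨ε, hε, hεu, hεP, hεw⟩ := (eventually_mem_nhdsWithin.and ((eventually_le_of_pos hu).and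
    ((eventually_le_of_pos hj).and ((eventually_all_finset (Ioc t₀ s)).2 fun r hr =>
      eventually_le_of_pos (hpos r (mem_Ioc.1 hr).1 (mem_Ioc.1 hr).2))))).exists
  have hα₀ : 0 < α := zero_lt_one.trans_le hα
  have hpow : 0 < α ^ (s - k) := pow_pos hα₀ _
  have hεa : α ^ (s - k) * (ε / α ^ (s - k)) = ε := mul_div_cancel₀ ε hpow.ne'
  have ha : 0 < ε / α ^ (s - k) := div_pos hε hpow
  have hfeas' := hfeas.add_prepay hα hij hkt hts hsT ha.le hεa hεu hεP
    (fun r h₁ h₂ => hεw r (mem_Ioc.2 ⟨h₁, h₂⟩)) hF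
  exact (costFree_add_prepay_lt hα₀ hη0 hη1 hkt hts hsT ha hεa).not_ge (hopt.2 _ _ hfeas')

theorem stmt8_constant_budget_free_general (n T : ℕ)
    (α : ℝ) (hα : 1 ≤ α)
    (Pbar : Matrix (Fin n) (Fin n) ℝ)
    (hPdiag : ∀ i, Pbar i i = 0)
    (e : ℕ → Fin n → ℝ) (he : ∀ t, t < T → ∀ i, 0 ≤ e t i)
    (F : ℕ → ℝ)
    (η γ : ℝ) (hη0 : 0 ≤ η) (hη1 : η < 1) (hγ : 0 < γ)
    (Pstar : ℕ → Matrix (Fin n) (Fin n) ℝ) (ustar : ℕ → Fin n → ℝ)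
    (hopt : OptimalFree T α η γ Pbar e F Pstar ustar) :
    ∀ k, k + 2 ≤ T → (∀ t, k ≤ t → t < T → F t = F k) →
      ∀ t, k < t → t < T → ∀ i, ustar t i = 0 := by
  intro k _ hFk t₀ hkt₀ ht₀ i
  by_contra hne
  have hu : 0 < ustar t₀ i := lt_of_le_of_ne ((hopt.1 t₀ ht₀).2.1 i) (Ne.symm hne)
  obtain ⟨s, hts, hsT, hnonpos, hfirst⟩ :=
    exists_first_succ_of_exists (hopt.exists_netWorth_nonpos hγ ht₀ hu)
  refine hopt.netWorth_succ_ne_zero hα hη0 hη1 (hPdiag i) (he s hsT i) hkt₀ hts hsT hu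
    (fun r h₁ h₂ => lt_of_not_ge (hfirst r h₁ h₂)) (fun r h₁ h₂ => ?_)
    (le_antisymm hnonpos (hopt.1.netWorth_nonneg_s8 hsT i))
  rw [hFk t₀ hkt₀.le ht₀, hFk r h₁ (by omega)]

theorem stmt8_constant_budget_free (n T : ℕ) (hn : 1 ≤ n) (hT : 1 ≤ T)
    (α : ℝ) (hα : 1 ≤ α)
    (Pbar : Matrix (Fin n) (Fin n) ℝ)
    (hPbar : ∀ i j, 0 ≤ Pbar i j) (hPdiag : ∀ i, Pbar i i = 0)
    (e : ℕ → Fin n → ℝ) (he : ∀ t, t < T → ∀ i, 0 ≤ e t i)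
    (F : ℕ → ℝ) (hF : ∀ t, 0 ≤ F t) (hFmono : ∀ s t, s ≤ t → F s ≤ F t)
    (η γ : ℝ) (hη0 : 0 ≤ η) (hη1 : η < 1) (hγ : 0 < γ)
    (Pstar : ℕ → Matrix (Fin n) (Fin n) ℝ) (ustar : ℕ → Fin n → ℝ)
    (hopt : OptimalFree T α η γ Pbar e F Pstar ustar) :
    ∀ k, k + 2 ≤ T → (∀ t, k ≤ t → t < T → F t = F k) →
      ∀ t, k < t → t < T → ∀ i, ustar t i = 0 :=
  stmt8_constant_budget_free_general n T α hα Pbar hPdiag e he F η γ hη0 hη1 hγ Pstar ustar hopt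
end
end

section
/- Let ([P*],[u*]) be an optimal process for the free-payments control problem with η∈[0,1) and γ>0. If some debt of node i remains unpaid at period t, i.e. p*_i(t)<p̄*_i(t) where p*(t)=P*(t)1 and p̄*(t)=P̄*(t)1, then node i pays out its entire balance at that period: w*_i(t+1)=0. -/
open Finset

noncomputable section

/-!
Backward induction on `t`. Suppose node `i` ends period `t` with positive worth while still owing
`j`, and that from `t + 1` on every node leaving a debt unpaid ends its period broke. Then a node
with positive worth at some `s ≥ t + 2` has no debt left, never pays again, and its worth never
decreases.

If `i` pays nothing at `t + 1`, it therefore pays nothing after `t`, and paying `j` slightly more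
at `t` is feasible and lowers every later residual debt. Otherwise `i` pays some `m` at `t + 1`.
Follow the positive payments of period `t + 1` from `m` through nodes that are broke at `t + 2`.
If this reaches a node `b` with positive worth, move a small flow along the path `i → ⋯ → b` from
period `t + 1` to period `t` (paying `D` at `t` instead of `α D` at `t + 1`): everybody stays
solvent and the unpaid debt at `t` drops. If it does not, the nodes reached form a set that no
payment leaves at `t + 1` and that receives cash (from `i`, or as `i`'s own positive worth), yet
holds none at `t + 2`, which contradicts conservation of cash.
-/

open Filter Topology Relation

namespace FreePayments

section Flow

variable {ι : Type*} [DecidableEq ι]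

theorem single_nonneg {v : ℝ} (hv : 0 ≤ v) (a c x y : ι) : 0 ≤ Matrix.single a c v x y := by
  rw [Matrix.single_apply]; split_ifs <;> simp [hv]

theorem sum_single_sub_sum [Fintype ι] (a c x : ι) (v : ℝ) :
    ∑ y, Matrix.single a c v x y - ∑ y, Matrix.single a c v y x =
      (if x = a then v else 0) - (if x = c then v else 0) := by
  simp [Matrix.single_apply, ite_and, Finset.sum_ite_eq, eq_comm]

theorem sum_sum_single_eq [Fintype ι] (a c : ι) (v : ℝ) :
    ∑ x, ∑ y, Matrix.single a c v x y = v := by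
  simp [Matrix.single_apply, ite_and, Finset.sum_ite_eq]

theorem exists_flow_of_transGen [Fintype ι] {r : ι → ι → Prop} {i b : ι} (h : TransGen r i b) :
    ∃ D : Matrix ι ι ℝ, (∀ a c, 0 ≤ D a c) ∧ (∀ a c, 0 < D a c → r a c) ∧
      0 < ∑ a, ∑ c, D a c ∧
      ∀ x, ∑ y, D x y - ∑ y, D y x = (if x = i then 1 else 0) - (if x = b then 1 else 0) := by
  have single_supp : ∀ {a c}, r a c → ∀ x y, 0 < Matrix.single a c (1 : ℝ) x y → r x y := by
    intro a c hac x y hpos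
    by_cases h : a = x ∧ c = y
    · obtain ⟨rfl, rfl⟩ := h; exact hac
    · rw [Matrix.single_apply_of_ne _ _ _ _ _ h] at hpos; exact absurd hpos (lt_irrefl 0)
  induction h with
  | @single c hic =>
    exact ⟨Matrix.single i c 1, single_nonneg zero_le_one i c, single_supp hic,
      by simp [sum_sum_single_eq], fun x => sum_single_sub_sum i c x 1⟩
  | @tail c d _ hcd ih =>
    obtain ⟨D, hD0, hDr, hDsum, hDdiv⟩ := ih
    refine ⟨D + Matrix.single c d 1,
      fun x y => add_nonneg (hD0 x y) (single_nonneg zero_le_one c d x y), fun x y hpos => ?_, ?_,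
      fun x => ?_⟩
    · by_cases h : c = x ∧ d = y
      · obtain ⟨rfl, rfl⟩ := h; exact hcd
      · rw [Matrix.add_apply, Matrix.single_apply_of_ne _ _ _ _ _ h, add_zero] at hpos
        exact hDr x y hpos
    · have : 0 ≤ ∑ x, ∑ y, Matrix.single c d (1 : ℝ) x y :=
        Finset.sum_nonneg fun x _ => Finset.sum_nonneg fun y _ => single_nonneg zero_le_one c d x y
      simp only [Matrix.add_apply, Finset.sum_add_distrib]
      linarith
    · simp only [Matrix.add_apply, Finset.sum_add_distrib]
      linarith [hDdiv x, sum_single_sub_sum c d x 1]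

end Flow

theorem eventually_mul_le {d m : ℝ} (hm : 0 ≤ m) (hdm : 0 < d → 0 < m) :
    ∀ᶠ ε in 𝓝[>] (0 : ℝ), ε * d ≤ m := by
  rcases le_or_gt d 0 with hd | hd
  · exact eventually_nhdsWithin_of_forall fun ε hε =>
      (mul_nonpos_of_nonneg_of_nonpos (le_of_lt hε) hd).trans hm
  · have : Tendsto (fun ε : ℝ => ε * d) (𝓝[>] 0) (𝓝 0) :=
      tendsto_nhdsWithin_of_tendsto_nhds ((continuous_mul_const d).tendsto' 0 0 (zero_mul d))
    exact (this.eventually_lt_const (hdm hd)).mono fun ε hε => hε.le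

variable {n : ℕ}

def unpaidTotal (α : ℝ) (Pbar : Matrix (Fin n) (Fin n) ℝ) (P : ℕ → Matrix (Fin n) (Fin n) ℝ)
    (s : ℕ) : ℝ :=
  ∑ i, ∑ j, (resLiab α Pbar P s i j - P s i j)

theorem sum_resLiab_succ (α : ℝ) (Pbar : Matrix (Fin n) (Fin n) ℝ)
    (P : ℕ → Matrix (Fin n) (Fin n) ℝ) (s : ℕ) :
    ∑ i, ∑ j, resLiab α Pbar P (s + 1) i j = α * unpaidTotal α Pbar P s := by
  simp only [resLiab, unpaidTotal, Finset.mul_sum]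

theorem costFree_lt_of_unpaidTotal_lt {T : ℕ} {α η : ℝ} (γ : ℝ) (hα : 0 ≤ α) (hη0 : 0 ≤ η)
    (hη1 : η < 1) {Pbar : Matrix (Fin n) (Fin n) ℝ} {P Q : ℕ → Matrix (Fin n) (Fin n) ℝ}
    (u : ℕ → Fin n → ℝ) {t : ℕ} (ht : t < T)
    (hle : ∀ s < T, unpaidTotal α Pbar Q s ≤ unpaidTotal α Pbar P s)
    (hlt : unpaidTotal α Pbar Q t < unpaidTotal α Pbar P t) :
    costFree T α η γ Pbar Q u < costFree T α η γ Pbar P u := by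
  obtain ⟨T, rfl⟩ : ∃ T', T = T' + 1 := ⟨T - 1, by omega⟩
  have hsum : ∑ s ∈ range (T + 1), unpaidTotal α Pbar Q s
      < ∑ s ∈ range (T + 1), unpaidTotal α Pbar P s :=
    Finset.sum_lt_sum (fun s hs => hle s (Finset.mem_range.1 hs)) ⟨t, Finset.mem_range.2 ht, hlt⟩
  have hterm : α * unpaidTotal α Pbar Q T ≤ α * unpaidTotal α Pbar P T :=
    mul_le_mul_of_nonneg_left (hle T (by omega)) hα
  have h1η : 0 < 1 - η := by linarith
  have hcost : ∀ P', costFree (T + 1) α η γ Pbar P' u = (1 - η) * ∑ s ∈ range (T + 1),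
      unpaidTotal α Pbar P' s + η * (α * unpaidTotal α Pbar P' T) + γ * budget u T := fun P' => by
    rw [costFree, sum_resLiab_succ]; rfl
  rw [hcost, hcost]
  nlinarith [mul_le_mul_of_nonneg_left hterm hη0]

section Perturbation

variable (α : ℝ) (Pbar : Matrix (Fin n) (Fin n) ℝ)

theorem resLiab_add_single (P : ℕ → Matrix (Fin n) (Fin n) ℝ) (t : ℕ)
    (A : Matrix (Fin n) (Fin n) ℝ) (s : ℕ) (a b : Fin n) :
    resLiab α Pbar (P + Pi.single t A) s a b =
      resLiab α Pbar P s a b - if t < s then α ^ (s - t) * A a b else 0 := by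
  induction s with
  | zero => simp [resLiab]
  | succ s ih =>
    simp only [resLiab, ih, Pi.add_apply, Matrix.add_apply, Pi.single_apply]
    rcases lt_trichotomy t s with h | rfl | h
    · simp only [h, h.ne', Nat.lt_succ_of_lt h, if_true, if_false, Matrix.zero_apply, add_zero,
        Nat.sub_add_comm h.le, pow_succ]
      ring
    · simp only [lt_irrefl, lt_add_one, if_true, if_false, sub_zero, add_tsub_cancel_left, pow_one]
      ring
    · simp [h.ne, show ¬ t < s + 1 by omega, show ¬ t < s by omega]

theorem resLiab_sub_add_single (P : ℕ → Matrix (Fin n) (Fin n) ℝ) (t : ℕ)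
    (A : Matrix (Fin n) (Fin n) ℝ) (s : ℕ) (a b : Fin n) :
    resLiab α Pbar (P + Pi.single t A) s a b - (P + Pi.single t A : ℕ → Matrix _ _ ℝ) s a b =
      resLiab α Pbar P s a b - P s a b - if t ≤ s then α ^ (s - t) * A a b else 0 := by
  rw [resLiab_add_single]
  simp only [Pi.add_apply, Matrix.add_apply, Pi.single_apply]
  rcases lt_trichotomy t s with h | rfl | h
  · simp only [h, h.le, h.ne', if_true, if_false, Matrix.zero_apply, add_zero]
    ring
  · simp only [lt_irrefl, le_refl, if_true, if_false, sub_zero, tsub_self, pow_zero, one_mul]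
    ring
  · simp [h.ne, show ¬ t < s by omega, show ¬ t ≤ s by omega]

theorem unpaidTotal_add_single (P : ℕ → Matrix (Fin n) (Fin n) ℝ) (t : ℕ)
    (A : Matrix (Fin n) (Fin n) ℝ) (s : ℕ) :
    unpaidTotal α Pbar (P + Pi.single t A) s =
      unpaidTotal α Pbar P s - if t ≤ s then α ^ (s - t) * ∑ a, ∑ b, A a b else 0 := by
  simp only [unpaidTotal, resLiab_sub_add_single]
  split_ifs <;> simp [Finset.sum_sub_distrib, Finset.mul_sum]

theorem resLiab_sub_eq_pow_mul_of_eq_zero {P : ℕ → Matrix (Fin n) (Fin n) ℝ} {t s : ℕ} {i j : Fin n}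
    (hts : t ≤ s) (hP : ∀ k, t < k → k ≤ s → P k i j = 0) :
    resLiab α Pbar P s i j - P s i j = α ^ (s - t) * (resLiab α Pbar P t i j - P t i j) := by
  induction s, hts using Nat.le_induction with
  | base => simp
  | succ s hts ih =>
    rw [hP (s + 1) (by omega) le_rfl, sub_zero]
    simp only [resLiab]
    rw [ih fun k h1 h2 => hP k h1 (by omega), Nat.sub_add_comm hts, pow_succ]
    ring

theorem netWorth_add_single (c : ℕ → Fin n → ℝ) (P : ℕ → Matrix (Fin n) (Fin n) ℝ) (t : ℕ)
    (A : Matrix (Fin n) (Fin n) ℝ) (s : ℕ) (x : Fin n) :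
    netWorth c (P + Pi.single t A) s x =
      netWorth c P s x + if t < s then (∑ y, A y x) - ∑ y, A x y else 0 := by
  induction s with
  | zero => simp [netWorth]
  | succ s ih =>
    simp only [netWorth, ih, Pi.add_apply, Matrix.add_apply, Pi.single_apply,
      Finset.sum_add_distrib]
    rcases lt_trichotomy t s with h | rfl | h
    · simp only [h, h.ne', Nat.lt_succ_of_lt h, if_true, if_false, Matrix.zero_apply,
        Finset.sum_const_zero, add_zero]
      ring
    · simp only [lt_irrefl, lt_add_one, if_true, if_false, add_zero]
      ring
    · simp [h.ne, show ¬ t < s + 1 by omega, show ¬ t < s by omega]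

/-- Pays `D` one period early: the residual debt at `t + 1` then drops by `α • D`, so paying
`α • D` less at `t + 1` leaves everything from `t + 2` on unchanged. -/
def flowShift (P : ℕ → Matrix (Fin n) (Fin n) ℝ) (t : ℕ) (D : Matrix (Fin n) (Fin n) ℝ) :
    ℕ → Matrix (Fin n) (Fin n) ℝ :=
  P + Pi.single t D + Pi.single (t + 1) ((-α) • D)

theorem flowShift_apply (P : ℕ → Matrix (Fin n) (Fin n) ℝ) (t : ℕ)
    (D : Matrix (Fin n) (Fin n) ℝ) (s : ℕ) (a b : Fin n) :
    flowShift α P t D s a b =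
      P s a b + (if s = t then D a b else 0) - if s = t + 1 then α * D a b else 0 := by
  simp only [flowShift, Pi.add_apply, Matrix.add_apply, Pi.single_apply]
  split_ifs <;>
    simp only [Matrix.zero_apply, Matrix.smul_apply, smul_eq_mul, add_zero, sub_zero] <;> ring

theorem resLiab_sub_flowShift (P : ℕ → Matrix (Fin n) (Fin n) ℝ) (t : ℕ)
    (D : Matrix (Fin n) (Fin n) ℝ) (s : ℕ) (a b : Fin n) :
    resLiab α Pbar (flowShift α P t D) s a b - flowShift α P t D s a b =
      resLiab α Pbar P s a b - P s a b - if s = t then D a b else 0 := by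
  rw [flowShift, resLiab_sub_add_single, resLiab_sub_add_single]
  simp only [Matrix.smul_apply, smul_eq_mul]
  rcases lt_trichotomy s t with h | rfl | h
  · simp [h.ne, show ¬ t ≤ s by omega, show ¬ t + 1 ≤ s by omega]
  · simp
  · have hpow : α ^ (s - t) = α ^ (s - (t + 1)) * α := by
      rw [← pow_succ]; congr 1; omega
    simp only [h.ne', h.le, show t + 1 ≤ s by omega, if_true, if_false, hpow, sub_zero]
    ring

theorem unpaidTotal_flowShift (P : ℕ → Matrix (Fin n) (Fin n) ℝ) (t : ℕ)
    (D : Matrix (Fin n) (Fin n) ℝ) (s : ℕ) :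
    unpaidTotal α Pbar (flowShift α P t D) s =
      unpaidTotal α Pbar P s - if s = t then ∑ a, ∑ b, D a b else 0 := by
  simp only [unpaidTotal, resLiab_sub_flowShift]
  split_ifs <;> simp [Finset.sum_sub_distrib]

theorem netWorth_flowShift (c : ℕ → Fin n → ℝ) (P : ℕ → Matrix (Fin n) (Fin n) ℝ) (t : ℕ)
    (D : Matrix (Fin n) (Fin n) ℝ) (s : ℕ) (x : Fin n) :
    netWorth c (flowShift α P t D) s x = netWorth c P s x -
      ((if t < s then 1 else 0) - if t + 1 < s then α else 0) * (∑ y, D x y - ∑ y, D y x) := by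
  rw [flowShift, netWorth_add_single, netWorth_add_single]
  simp only [Matrix.smul_apply, smul_eq_mul, ← Finset.mul_sum]
  split_ifs <;> ring

end Perturbation

theorem netWorth_le_netWorth_of_row_eq_zero {c : ℕ → Fin n → ℝ}
    {P : ℕ → Matrix (Fin n) (Fin n) ℝ} {x : Fin n} {a b : ℕ} (hab : a ≤ b)
    (hc : ∀ k, a ≤ k → k < b → 0 ≤ c k x) (hP : ∀ k, a ≤ k → k < b → ∀ y, 0 ≤ P k y x)
    (hrow : ∀ k, a ≤ k → k < b → ∀ y, P k x y = 0) :
    netWorth c P a x ≤ netWorth c P b x := by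
  induction b, hab using Nat.le_induction with
  | base => exact le_rfl
  | succ b hab ih =>
    have hin : 0 ≤ ∑ y, P b y x := Finset.sum_nonneg fun y _ => hP b hab (by omega) y
    have hout : ∑ y, P b x y = 0 := Finset.sum_eq_zero fun y _ => hrow b hab (by omega) y
    have := ih (fun k h1 h2 => hc k h1 (by omega)) (fun k h1 h2 => hP k h1 (by omega))
      (fun k h1 h2 => hrow k h1 (by omega))
    simp only [netWorth, hout]
    linarith [hc b hab (by omega)]

theorem sum_netWorth_succ_of_closed (c : ℕ → Fin n → ℝ) (P : ℕ → Matrix (Fin n) (Fin n) ℝ)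
    (s : ℕ) (S : Finset (Fin n)) (hS : ∀ v ∈ S, ∀ b ∉ S, P s v b = 0) :
    ∑ v ∈ S, netWorth c P (s + 1) v =
      ∑ v ∈ S, (netWorth c P s v + c s v) + ∑ v ∈ S, ∑ a ∈ Sᶜ, P s a v := by
  have hout : ∀ v ∈ S, ∑ b, P s v b = ∑ b ∈ S, P s v b := fun v hv =>
    (Finset.sum_subset (Finset.subset_univ S) fun b _ hb => hS v hv b hb).symm
  have hin : ∀ v, ∑ a, P s a v = ∑ a ∈ S, P s a v + ∑ a ∈ Sᶜ, P s a v := fun v =>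
    (Finset.sum_add_sum_compl S _).symm
  simp only [netWorth]
  rw [Finset.sum_congr rfl fun v hv => by rw [hout v hv, hin v]]
  simp only [Finset.sum_sub_distrib, Finset.sum_add_distrib]
  rw [Finset.sum_comm (s := S) (t := S)]
  ring

def LiquidatesAt (α : ℝ) (Pbar : Matrix (Fin n) (Fin n) ℝ) (c : ℕ → Fin n → ℝ)
    (P : ℕ → Matrix (Fin n) (Fin n) ℝ) (r : ℕ) : Prop :=
  ∀ x y, P r x y < resLiab α Pbar P r x y → netWorth c P (r + 1) x = 0

section Feasible

variable {T : ℕ} {α : ℝ} {Pbar : Matrix (Fin n) (Fin n) ℝ} {e : ℕ → Fin n → ℝ} {F : ℕ → ℝ}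
  {P : ℕ → Matrix (Fin n) (Fin n) ℝ} {u : ℕ → Fin n → ℝ}

theorem FeasibleFree.of_payments (h : FeasibleFree T α Pbar e F P u)
    {Q : ℕ → Matrix (Fin n) (Fin n) ℝ}
    (hQ : ∀ s < T, (∀ a b, 0 ≤ Q s a b) ∧ (∀ a b, Q s a b ≤ resLiab α Pbar Q s a b) ∧
      ∀ x, 0 ≤ netWorth (fun s i => e s i + u s i) Q (s + 1) x) :
    FeasibleFree T α Pbar e F Q u := fun s hs =>
  ⟨(hQ s hs).1, (h s hs).2.1, (hQ s hs).2.1, (hQ s hs).2.2, (h s hs).2.2.2.2⟩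

theorem FeasibleFree.netWorth_nonneg (h : FeasibleFree T α Pbar e F P u) {s : ℕ} (hs : s ≤ T)
    (x : Fin n) : 0 ≤ netWorth (fun s i => e s i + u s i) P s x := by
  cases s with
  | zero => simp [netWorth]
  | succ s => exact (h s hs).2.2.2.1 x

theorem FeasibleFree.netWorth_le_of_row_eq_zero (h : FeasibleFree T α Pbar e F P u)
    (he : ∀ t, t < T → ∀ i, 0 ≤ e t i) {x : Fin n} {a b : ℕ} (hab : a ≤ b) (hbT : b ≤ T)
    (hrow : ∀ k, a ≤ k → k < b → ∀ y, P k x y = 0) :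
    netWorth (fun s i => e s i + u s i) P a x ≤ netWorth (fun s i => e s i + u s i) P b x :=
  netWorth_le_netWorth_of_row_eq_zero hab
    (fun k _ hk => add_nonneg (he k (by omega) x) ((h k (by omega)).2.1 x))
    (fun k _ hk y => (h k (by omega)).1 y x) hrow

theorem FeasibleFree.row_eq_zero_of_liquidatesAt (h : FeasibleFree T α Pbar e F P u) {r : ℕ}
    {x : Fin n} (hr : r + 1 < T) (hliq : LiquidatesAt α Pbar (fun s i => e s i + u s i) P r)
    (hw : 0 < netWorth (fun s i => e s i + u s i) P (r + 1) x) (y : Fin n) :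
    P (r + 1) x y = 0 := by
  have hpaid : P r x y = resLiab α Pbar P r x y :=
    le_antisymm ((h r (by omega)).2.2.1 x y) (not_lt.1 fun hlt => hw.ne' (hliq x y hlt))
  have hzero : resLiab α Pbar P (r + 1) x y = 0 := by simp [resLiab, hpaid]
  exact le_antisymm (hzero ▸ (h (r + 1) hr).2.2.1 x y) ((h (r + 1) hr).1 x y)

theorem FeasibleFree.row_eq_zero_of_netWorth_pos (h : FeasibleFree T α Pbar e F P u)
    (he : ∀ t, t < T → ∀ i, 0 ≤ e t i) {a : ℕ} {x : Fin n}
    (hliq : ∀ r, a ≤ r → r + 1 < T → LiquidatesAt α Pbar (fun s i => e s i + u s i) P r)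
    (hw : 0 < netWorth (fun s i => e s i + u s i) P (a + 1) x) :
    ∀ s, a < s → s < T → ∀ y, P s x y = 0 := by
  have hmono : ∀ r, a ≤ r → r < T → netWorth (fun s i => e s i + u s i) P (a + 1) x ≤
      netWorth (fun s i => e s i + u s i) P (r + 1) x := by
    intro r har
    induction r, har using Nat.le_induction with
    | base => exact fun _ => le_rfl
    | succ r har ih =>
      intro hr
      refine (ih (by omega)).trans
        (FeasibleFree.netWorth_le_of_row_eq_zero h he (Nat.le_succ _) hr ?_)
      intro k hk1 hk2
      obtain rfl : k = r + 1 := by omega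
      exact FeasibleFree.row_eq_zero_of_liquidatesAt h hr (hliq r har hr)
        (hw.trans_le (ih (by omega)))
  intro s has hsT
  obtain ⟨r, rfl⟩ : ∃ r, s = r + 1 := ⟨s - 1, by omega⟩
  exact FeasibleFree.row_eq_zero_of_liquidatesAt h hsT (hliq r (by omega) hsT)
    (hw.trans_le (hmono r (by omega) (by omega)))

theorem FeasibleFree.exists_netWorth_succ_pos_of_closed (h : FeasibleFree T α Pbar e F P u)
    (he : ∀ t, t < T → ∀ i, 0 ≤ e t i) {s : ℕ} (hs : s < T) {S : Finset (Fin n)}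
    (hS : ∀ v ∈ S, ∀ c ∉ S, P s v c = 0)
    (hpos : (∃ x ∈ S, 0 < netWorth (fun s i => e s i + u s i) P s x) ∨
      ∃ a ∉ S, ∃ x ∈ S, 0 < P s a x) :
    ∃ x ∈ S, 0 < netWorth (fun s i => e s i + u s i) P (s + 1) x := by
  by_contra! hzero
  have hcash : ∀ x ∈ S, 0 ≤ netWorth (fun s i => e s i + u s i) P s x + (e s x + u s x) :=
    fun x _ => add_nonneg (FeasibleFree.netWorth_nonneg h hs.le x)
      (add_nonneg (he s hs x) ((h s hs).2.1 x))
  have hinflow : ∀ x ∈ S, 0 ≤ ∑ a ∈ Sᶜ, P s a x :=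
    fun x _ => Finset.sum_nonneg fun a _ => (h s hs).1 a x
  have hbalance := sum_netWorth_succ_of_closed (fun s i => e s i + u s i) P s S hS
  have hle : ∑ x ∈ S, netWorth (fun s i => e s i + u s i) P (s + 1) x ≤ 0 :=
    Finset.sum_nonpos hzero
  have h1 := Finset.sum_nonneg hcash
  have h2 := Finset.sum_nonneg hinflow
  rcases hpos with ⟨x, hx, hwx⟩ | ⟨a, ha, x, hx, hax⟩
  · have := Finset.single_le_sum hcash hx
    linarith [add_nonneg (he s hs x) ((h s hs).2.1 x)]
  · have := (Finset.single_le_sum (fun a _ => (h s hs).1 a x) (Finset.mem_compl.2 ha)).trans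
      (Finset.single_le_sum hinflow hx)
    linarith

theorem feasibleFree_prepay (h : FeasibleFree T α Pbar e F P u)
    (he : ∀ t, t < T → ∀ i, 0 ≤ e t i) (hα : 0 ≤ α) {t : ℕ} {i j : Fin n} {δ : ℝ} (hδ : 0 ≤ δ)
    (hδgap : δ ≤ resLiab α Pbar P t i j - P t i j)
    (hδw : δ ≤ netWorth (fun s i => e s i + u s i) P (t + 1) i)
    (hrow : ∀ s, t < s → s < T → ∀ y, P s i y = 0) :
    FeasibleFree T α Pbar e F (P + Pi.single t (Matrix.single i j δ)) u := by
  refine FeasibleFree.of_payments h fun s hs => ⟨fun a b => ?_, fun a b => ?_, fun x => ?_⟩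
  · simp only [Pi.add_apply, Matrix.add_apply, Pi.single_apply]
    split_ifs
    · exact add_nonneg ((h s hs).1 a b) (single_nonneg hδ i j a b)
    · simpa using (h s hs).1 a b
  · rw [← sub_nonneg, resLiab_sub_add_single]
    have hP := sub_nonneg.2 ((h s hs).2.2.1 a b)
    by_cases hab : i = a ∧ j = b
    · obtain ⟨rfl, rfl⟩ := hab
      split_ifs with hts
      · rw [resLiab_sub_eq_pow_mul_of_eq_zero α Pbar hts fun k h1 h2 => hrow k h1 (by omega) j,
          Matrix.single_apply_same, ← mul_sub]
        exact mul_nonneg (pow_nonneg hα _) (sub_nonneg.2 hδgap)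
      · simpa using hP
    · simpa [Matrix.single_apply_of_ne _ _ _ _ _ hab] using hP
  · rw [netWorth_add_single, ← neg_sub, sum_single_sub_sum]
    have hx := (h s hs).2.2.2.1 x
    split_ifs with hts hxi <;> try linarith
    rw [hxi]
    linarith [FeasibleFree.netWorth_le_of_row_eq_zero h he hts hs fun k hk1 hk2 =>
      hrow k (by omega) (by omega)]

theorem FeasibleFree.exists_costFree_lt_of_prepay (h : FeasibleFree T α Pbar e F P u)
    (he : ∀ t, t < T → ∀ i, 0 ≤ e t i) (hα : 0 ≤ α) {η : ℝ} (γ : ℝ) (hη0 : 0 ≤ η)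
    (hη1 : η < 1) {t : ℕ} {i j : Fin n} (ht : t < T)
    (hgap : P t i j < resLiab α Pbar P t i j)
    (hw : 0 < netWorth (fun s i => e s i + u s i) P (t + 1) i)
    (hrow : ∀ s, t < s → s < T → ∀ y, P s i y = 0) :
    ∃ Q, FeasibleFree T α Pbar e F Q u ∧ costFree T α η γ Pbar Q u < costFree T α η γ Pbar P u := by
  obtain ⟨δ, hδ, hδgap, hδw⟩ : ∃ δ, 0 < δ ∧ δ ≤ resLiab α Pbar P t i j - P t i j ∧
      δ ≤ netWorth (fun s i => e s i + u s i) P (t + 1) i :=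
    ⟨_, lt_min (sub_pos.2 hgap) hw, min_le_left _ _, min_le_right _ _⟩
  refine ⟨_, feasibleFree_prepay h he hα hδ.le hδgap hδw hrow, ?_⟩
  refine costFree_lt_of_unpaidTotal_lt γ hα hη0 hη1 u ht (fun s _ => ?_) ?_ <;>
    rw [unpaidTotal_add_single, sum_sum_single_eq]
  · split_ifs
    · linarith [mul_nonneg (pow_nonneg hα (s - t)) hδ.le]
    · linarith
  · simpa using hδ

theorem feasibleFree_flowShift (h : FeasibleFree T α Pbar e F P u)
    (hα : 1 ≤ α) {t : ℕ} {i b : Fin n} {D : Matrix (Fin n) (Fin n) ℝ} {v : ℝ} (ht : t + 1 < T)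
    (hD0 : ∀ a c, 0 ≤ D a c) (hDP : ∀ a c, α * D a c ≤ P (t + 1) a c)
    (hdiv : ∀ x, ∑ y, D x y - ∑ y, D y x = (if x = i then v else 0) - (if x = b then v else 0))
    (hv : 0 ≤ v) (hvi : v ≤ netWorth (fun s i => e s i + u s i) P (t + 1) i)
    (hvb : ∀ s, t + 1 < s → s ≤ T → (α - 1) * v ≤ netWorth (fun s i => e s i + u s i) P s b) :
    FeasibleFree T α Pbar e F (flowShift α P t D) u := by
  refine FeasibleFree.of_payments h fun s hs => ⟨fun a c => ?_, fun a c => ?_, fun x => ?_⟩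
  · have hP := (h s hs).1 a c
    rw [flowShift_apply]
    split_ifs with h1 h2 h2
    · omega
    · linarith [hD0 a c]
    · subst h2; linarith [hDP a c]
    · linarith
  · rw [← sub_nonneg, resLiab_sub_flowShift]
    split_ifs with hst
    · subst hst
      have hnext : α * (resLiab α Pbar P s a c - P s a c) = resLiab α Pbar P (s + 1) a c := rfl
      have := (h (s + 1) ht).2.2.1 a c
      nlinarith [hDP a c]
    · simpa using (h s hs).2.2.1 a c
  · rw [netWorth_flowShift, hdiv]
    have hx := (h s hs).2.2.2.1 x
    rcases lt_trichotomy s t with hst | rfl | hst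
    · rw [if_neg (by omega), if_neg (by omega)]
      simpa using hx
    · simp only [lt_add_one, if_true, lt_irrefl, if_false, sub_zero, one_mul]
      split_ifs with hxi hxb hxb <;> [linarith; (subst hxi; linarith); linarith; linarith]
    · have hαv : 0 ≤ (α - 1) * v := mul_nonneg (sub_nonneg.2 hα) hv
      simp only [show t < s + 1 by omega, show t + 1 < s + 1 by omega, if_true]
      split_ifs with hxi hxb hxb <;>
        [linarith; linarith; (subst hxb; linarith [hvb (s + 1) (by omega) hs]); linarith]

theorem FeasibleFree.exists_costFree_lt_of_flow (h : FeasibleFree T α Pbar e F P u)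
    (he : ∀ t, t < T → ∀ i, 0 ≤ e t i) (hα : 1 ≤ α) {η : ℝ} (γ : ℝ) (hη0 : 0 ≤ η)
    (hη1 : η < 1) {t : ℕ} {i b : Fin n} (ht : t + 1 < T)
    (hpath : TransGen (fun a c => 0 < P (t + 1) a c) i b)
    (hwi : 0 < netWorth (fun s i => e s i + u s i) P (t + 1) i)
    (hwb : 0 < netWorth (fun s i => e s i + u s i) P (t + 2) b)
    (hrow : ∀ s, t + 1 < s → s < T → ∀ y, P s b y = 0) :
    ∃ Q, FeasibleFree T α Pbar e F Q u ∧ costFree T α η γ Pbar Q u < costFree T α η γ Pbar P u := by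
  obtain ⟨D, hD0, hDsupp, hDsum, hDdiv⟩ := exists_flow_of_transGen hpath
  have hα0 : 0 < α := by linarith
  obtain ⟨ε, hε, hεi, hεb, hεD⟩ : ∃ ε : ℝ, ε ∈ Set.Ioi 0 ∧
      ε * 1 ≤ netWorth (fun s i => e s i + u s i) P (t + 1) i ∧
      ε * α ≤ netWorth (fun s i => e s i + u s i) P (t + 2) b ∧
      ∀ a c, ε * (α * D a c) ≤ P (t + 1) a c :=
    (eventually_mem_nhdsWithin.and <| (eventually_mul_le hwi.le fun _ => hwi).and <|
      (eventually_mul_le hwb.le fun _ => hwb).and <| eventually_all.2 fun a => eventually_all.2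
        fun c => eventually_mul_le ((h (t + 1) ht).1 a c) fun hpos =>
          hDsupp a c (pos_of_mul_pos_right hpos hα0.le)).exists
  have hε0 : 0 < ε := hε
  have hwb_mono : ∀ s, t + 1 < s → s ≤ T → (α - 1) * ε ≤
      netWorth (fun s i => e s i + u s i) P s b := fun s h1 h2 => by
    have := FeasibleFree.netWorth_le_of_row_eq_zero h he (a := t + 2) (by omega) h2
      fun k hk1 hk2 => hrow k (by omega) (by omega)
    linarith
  refine ⟨flowShift α P t (ε • D), feasibleFree_flowShift h hα ht (v := ε)
    (fun a c => mul_nonneg hε0.le (hD0 a c)) (fun a c => ?_) (fun x => ?_) hε0.le (by linarith)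
    hwb_mono, ?_⟩
  · simpa [Matrix.smul_apply, mul_left_comm] using hεD a c
  · simp only [Matrix.smul_apply, smul_eq_mul, ← Finset.mul_sum, ← mul_sub, hDdiv]
    split_ifs <;> ring
  · refine costFree_lt_of_unpaidTotal_lt γ hα0.le hη0 hη1 u (t := t) (by omega)
      (fun s _ => ?_) ?_ <;> rw [unpaidTotal_flowShift]
    · split_ifs
      · have : 0 ≤ ∑ a, ∑ c, (ε • D) a c :=
          Finset.sum_nonneg fun a _ => Finset.sum_nonneg fun c _ => mul_nonneg hε0.le (hD0 a c)
        linarith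
      · linarith
    · simp only [if_true, Matrix.smul_apply, smul_eq_mul, ← Finset.mul_sum]
      linarith [mul_pos hε0 hDsum]

theorem FeasibleFree.exists_costFree_lt_of_pays_next (h : FeasibleFree T α Pbar e F P u)
    (he : ∀ t, t < T → ∀ i, 0 ≤ e t i) (hα : 1 ≤ α) {η : ℝ} (γ : ℝ) (hη0 : 0 ≤ η)
    (hη1 : η < 1) {t : ℕ} {i m : Fin n} (ht : t + 1 < T)
    (hliq : ∀ r, t + 1 ≤ r → r + 1 < T → LiquidatesAt α Pbar (fun s i => e s i + u s i) P r)
    (hwi : 0 < netWorth (fun s i => e s i + u s i) P (t + 1) i) (hm : 0 < P (t + 1) i m) :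
    ∃ Q, FeasibleFree T α Pbar e F Q u ∧ costFree T α η γ Pbar Q u < costFree T α η γ Pbar P u := by
  classical
  set R := ReflTransGen
    (fun a c => netWorth (fun s i => e s i + u s i) P (t + 2) a = 0 ∧ 0 < P (t + 1) a c) m
  by_cases hexit : ∃ b, R b ∧ 0 < netWorth (fun s i => e s i + u s i) P (t + 2) b
  · obtain ⟨b, hRb, hwb⟩ := hexit
    exact FeasibleFree.exists_costFree_lt_of_flow h he hα γ hη0 hη1 ht
      (TransGen.head' hm (ReflTransGen.mono (fun _ _ hac => hac.2) _ _ hRb)) hwi hwb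
      (FeasibleFree.row_eq_zero_of_netWorth_pos h he hliq hwb)
  · push Not at hexit
    have hzero : ∀ b, R b → netWorth (fun s i => e s i + u s i) P (t + 2) b = 0 := fun b hb =>
      le_antisymm (hexit b hb) (FeasibleFree.netWorth_nonneg h (by omega) b)
    set S := Finset.univ.filter R
    have hmem : ∀ v, v ∈ S ↔ R v := by simp [S]
    have hclosed : ∀ v ∈ S, ∀ c ∉ S, P (t + 1) v c = 0 := by
      intro v hv c hc
      by_contra hne
      exact hc ((hmem c).2 (((hmem v).1 hv).tail
        ⟨hzero v ((hmem v).1 hv), lt_of_le_of_ne ((h (t + 1) ht).1 v c) (Ne.symm hne)⟩))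
    have hsource : (∃ x ∈ S, 0 < netWorth (fun s i => e s i + u s i) P (t + 1) x) ∨
        ∃ a ∉ S, ∃ x ∈ S, 0 < P (t + 1) a x := by
      by_cases hiS : i ∈ S
      · exact Or.inl ⟨i, hiS, hwi⟩
      · exact Or.inr ⟨i, hiS, m, (hmem m).2 ReflTransGen.refl, hm⟩
    obtain ⟨x, hx, hwx⟩ := FeasibleFree.exists_netWorth_succ_pos_of_closed h he ht hclosed hsource
    exact absurd (hzero x ((hmem x).1 hx)) hwx.ne'

theorem OptimalFree.liquidatesAt_of_liquidatesAt_later {η γ : ℝ}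
    (hopt : OptimalFree T α η γ Pbar e F P u) (he : ∀ t, t < T → ∀ i, 0 ≤ e t i) (hα : 1 ≤ α)
    (hη0 : 0 ≤ η) (hη1 : η < 1) {t : ℕ} (ht : t < T)
    (hlater : ∀ r, t < r → r < T → LiquidatesAt α Pbar (fun s i => e s i + u s i) P r) :
    LiquidatesAt α Pbar (fun s i => e s i + u s i) P t := by
  have h := hopt.1
  intro i j hgap
  by_contra hne
  have hwi : 0 < netWorth (fun s i => e s i + u s i) P (t + 1) i :=
    lt_of_le_of_ne ((h t ht).2.2.2.1 i) (Ne.symm hne)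
  suffices ∃ Q, FeasibleFree T α Pbar e F Q u ∧
      costFree T α η γ Pbar Q u < costFree T α η γ Pbar P u by
    obtain ⟨Q, hQ, hlt⟩ := this
    exact (hopt.2 Q u hQ).not_gt hlt
  rcases Nat.lt_or_ge (t + 1) T with hT | hT
  · have hliq : ∀ r, t + 1 ≤ r → r + 1 < T → LiquidatesAt α Pbar (fun s i => e s i + u s i) P r :=
      fun r h1 h2 => hlater r (by omega) (by omega)
    by_cases hpays : ∃ m, 0 < P (t + 1) i m
    · obtain ⟨m, hm⟩ := hpays
      exact FeasibleFree.exists_costFree_lt_of_pays_next h he hα γ hη0 hη1 hT hliq hwi hm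
    push Not at hpays
    have hrow : ∀ y, P (t + 1) i y = 0 := fun y => le_antisymm (hpays y) ((h (t + 1) hT).1 i y)
    have hwi' : 0 < netWorth (fun s i => e s i + u s i) P (t + 2) i :=
      hwi.trans_le <| FeasibleFree.netWorth_le_of_row_eq_zero h he (Nat.le_succ _) hT
        fun k h1 h2 => by obtain rfl : k = t + 1 := (by omega); exact hrow
    have hrow' := FeasibleFree.row_eq_zero_of_netWorth_pos h he hliq hwi'
    refine FeasibleFree.exists_costFree_lt_of_prepay h he (by linarith) γ hη0 hη1 ht hgap hwi
      fun s h1 h2 => ?_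
    rcases (show t + 1 ≤ s from h1).eq_or_lt with rfl | h1
    · exact hrow
    · exact hrow' s h1 h2
  · exact FeasibleFree.exists_costFree_lt_of_prepay h he (by linarith) γ hη0 hη1 ht hgap hwi
      fun s h1 h2 => absurd h2 (by omega)

end Feasible

end FreePayments

open FreePayments in
theorem stmt9_unpaid_zero_worth_free_general (n T : ℕ)
    (α : ℝ) (hα : 1 ≤ α)
    (Pbar : Matrix (Fin n) (Fin n) ℝ)
    (e : ℕ → Fin n → ℝ) (he : ∀ t, t < T → ∀ i, 0 ≤ e t i)
    (F : ℕ → ℝ)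
    (η γ : ℝ) (hη0 : 0 ≤ η) (hη1 : η < 1)
    (Pstar : ℕ → Matrix (Fin n) (Fin n) ℝ) (ustar : ℕ → Fin n → ℝ)
    (hopt : OptimalFree T α η γ Pbar e F Pstar ustar) :
    ∀ i : Fin n, ∀ t, t < T →
      (∑ j, Pstar t i j) < (∑ j, resLiab α Pbar Pstar t i j) →
      netWorth (fun s i => e s i + ustar s i) Pstar (t + 1) i = 0 := by
  have hliq : ∀ k ≤ T, ∀ t, k ≤ t → t < T →
      LiquidatesAt α Pbar (fun s i => e s i + ustar s i) Pstar t := by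
    intro k hk
    induction hk using Nat.decreasingInduction with
    | self => exact fun t h1 h2 => absurd h2 (by omega)
    | of_succ k _ ih =>
      intro t h1 h2
      rcases h1.eq_or_lt with rfl | h1
      · exact OptimalFree.liquidatesAt_of_liquidatesAt_later hopt he hα hη0 hη1 h2
          fun r hr1 hr2 => ih r hr1 hr2
      · exact ih t h1 h2
  intro i t ht hgap
  obtain ⟨j, -, hj⟩ := Finset.exists_lt_of_sum_lt hgap
  exact hliq t ht.le t le_rfl ht i j hj

theorem stmt9_unpaid_zero_worth_free (n T : ℕ) (hn : 1 ≤ n) (hT : 1 ≤ T)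
    (α : ℝ) (hα : 1 ≤ α)
    (Pbar : Matrix (Fin n) (Fin n) ℝ)
    (hPbar : ∀ i j, 0 ≤ Pbar i j) (hPdiag : ∀ i, Pbar i i = 0)
    (e : ℕ → Fin n → ℝ) (he : ∀ t, t < T → ∀ i, 0 ≤ e t i)
    (F : ℕ → ℝ) (hF : ∀ t, 0 ≤ F t) (hFmono : ∀ s t, s ≤ t → F s ≤ F t)
    (η γ : ℝ) (hη0 : 0 ≤ η) (hη1 : η < 1) (hγ : 0 < γ)
    (Pstar : ℕ → Matrix (Fin n) (Fin n) ℝ) (ustar : ℕ → Fin n → ℝ)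
    (hopt : OptimalFree T α η γ Pbar e F Pstar ustar) :
    ∀ i : Fin n, ∀ t, t < T →
      (∑ j, Pstar t i j) < (∑ j, resLiab α Pbar Pstar t i j) →
      netWorth (fun s i => e s i + ustar s i) Pstar (t + 1) i = 0 :=
  stmt9_unpaid_zero_worth_free_general n T α hα Pbar e he F η γ hη0 hη1 Pstar ustar hopt
end
end
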